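/- arXiv:1802.08372 — 11 statements merged into one kernel-verified Lean document; each statement's English description precedes it below -/
import Mathlib

section
/- Let m ≤ k ≤ n be positive integers, a_1,…,a_n ∈ ℝ^m, x ∈ [0,1]^n with Σ_{i∈[n]} x_i = k, and α ∈ [0,1]. Let μ be a probability distribution on the subsets of [n] (i.e., μ : 2^{[n]} → [0,1] with Σ_S μ(S) = 1) supported on subsets of size k. If μ is m-wise α-positively correlated with respect to x, i.e., for every T ⊆ [n] with |T| = m one has Σ_{S : T ⊆ S} μ(S) ≥ α^m ∏_{i∈T} x_i, then Σ_{S ⊆ [n]} μ(S) · det(Σ_{i∈S} a_i a_iᵀ) ≥ α^m · det(Σ_{i∈[n]} x_i a_i a_iᵀ). -/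
/-!
By the Cauchy–Binet formula, `det (∑ i, w i • a i a iᵀ) = ∑_{#T = m} (∏ i ∈ T, w i) * det (A_T)²`,
where `A_T` is the `m × m` minor of the rows `a i`, `i ∈ T`. With `w` the indicator of `S`,
averaging over `μ` turns the left side into `∑_T Pr[T ⊆ 𝒮] det (A_T)²`; with `w = x` the right
side becomes `α ^ m * ∑_T (∏ i ∈ T, x i) * det (A_T)²`. Since `det (A_T)² ≥ 0`, the correlation
hypothesis compares the two sums term by term.
-/

open Matrix Finset

namespace Finset

variable {ι n : Type*} [LinearOrder ι] [Fintype ι] {m : ℕ}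

theorem sum_comp_orderEmbOfFin {M : Type*} [AddCommMonoid M] [Fintype n] [DecidableEq n]
    (T : Finset ι) (h : #T = m) (G : (n → ι) → M) :
    ∑ σ : n → Fin m, G (T.orderEmbOfFin h ∘ σ) = ∑ g : n → ι with ∀ r, g r ∈ T, G g := by
  rw [sum_filter]
  refine Fintype.sum_of_injective _ ((T.orderEmbOfFin h).injective.comp_left (α := n)) _ _
    (fun g hg => ?_) fun σ => by simp
  refine if_neg fun hgT => hg ?_
  have hrange : ∀ r, g r ∈ Set.range (T.orderEmbOfFin h) := by simpa using hgT
  choose σ hσ using hrange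
  exact ⟨σ, funext hσ⟩

theorem filter_powersetCard_eq_singleton_image {g : Fin m → ι}
    (hg : Function.Injective g) :
    {T ∈ powersetCard m (univ : Finset ι) | ∀ r, g r ∈ T} = {univ.image g} := by
  have hcard : #(univ.image g) = m := by simp [card_image_of_injective _ hg]
  refine eq_singleton_iff_unique_mem.2 ⟨by simp [hcard], fun T hT => ?_⟩
  obtain ⟨hTm, hgT⟩ := mem_filter.1 hT
  refine (eq_of_subset_of_card_le (fun i hi => ?_) ?_).symm
  · obtain ⟨r, -, rfl⟩ := mem_image.1 hi
    exact hgT r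
  · rw [hcard, (mem_powersetCard.1 hTm).2]

end Finset

namespace Matrix

variable {R ι n : Type*} [CommRing R]

theorem det_mul_eq_sum_prod_mul_det_submatrix [Fintype ι] [Fintype n] [DecidableEq n]
    (B : Matrix n ι R) (C : Matrix ι n R) :
    (B * C).det = ∑ g : n → ι, (∏ r, B r (g r)) * (C.submatrix g id).det := by
  have hrows : B * C = fun r => ∑ i, B r i • C i := by
    ext r c
    simp [mul_apply, Finset.sum_apply]
  rw [hrows]
  change detRowAlternating.toMultilinearMap _ = _
  rw [MultilinearMap.map_sum]
  refine Fintype.sum_congr _ _ fun g => ?_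
  rw [MultilinearMap.map_smul_univ, smul_eq_mul]
  rfl

theorem det_submatrix_eq_zero_of_not_injective [Fintype n] [DecidableEq n] (C : Matrix ι n R)
    {g : n → ι} (hg : ¬Function.Injective g) : (C.submatrix g id).det = 0 :=
  detRowAlternating.map_eq_zero_of_not_injective (C ∘ g) fun h => hg h.of_comp

variable [LinearOrder ι] {m : ℕ}

noncomputable def rowMinor (C : Matrix ι (Fin m) R) (T : Finset ι) : R :=
  if h : #T = m then (C.submatrix (T.orderEmbOfFin h) id).det else 0

theorem rowMinor_of_card_ne (C : Matrix ι (Fin m) R) {T : Finset ι} (h : #T ≠ m) :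
    rowMinor C T = 0 :=
  dif_neg h

theorem rowMinor_diagonal_mul [Fintype ι] (w : ι → R) (C : Matrix ι (Fin m) R) (T : Finset ι) :
    rowMinor (diagonal w * C) T = (∏ i ∈ T, w i) * rowMinor C T := by
  unfold rowMinor
  split_ifs with h
  · have hprod : ∏ i ∈ T, w i = ∏ r, w (T.orderEmbOfFin h r) := by
      conv_lhs => rw [← T.image_orderEmbOfFin_univ h]
      exact prod_image fun _ _ _ _ hrs => (T.orderEmbOfFin h).injective hrs
    rw [hprod, ← det_mul_column]
    congr 1
    ext r c
    simp [diagonal_mul]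
  · rw [mul_zero]

theorem rowMinor_transpose_mul_rowMinor [Fintype ι] (B : Matrix (Fin m) ι R)
    (C : Matrix ι (Fin m) R) {T : Finset ι} (h : #T = m) :
    rowMinor Bᵀ T * rowMinor C T
      = ∑ g : Fin m → ι with ∀ r, g r ∈ T, (∏ r, B r (g r)) * (C.submatrix g id).det := by
  rw [rowMinor, rowMinor, dif_pos h, dif_pos h, ← det_transpose, ← det_mul,
    det_mul_eq_sum_prod_mul_det_submatrix]
  convert sum_comp_orderEmbOfFin T h fun g => (∏ r, B r (g r)) * (C.submatrix g id).det
    using 4 <;> rfl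

/-- The Cauchy–Binet formula. -/
theorem det_mul_eq_sum_rowMinor_mul_rowMinor [Fintype ι] (B : Matrix (Fin m) ι R)
    (C : Matrix ι (Fin m) R) :
    (B * C).det = ∑ T : Finset ι, rowMinor Bᵀ T * rowMinor C T := by
  set F : (Fin m → ι) → R := fun g => (∏ r, B r (g r)) * (C.submatrix g id).det
  have hfiber : ∀ g, ∑ T ∈ powersetCard m univ with ∀ r, g r ∈ T, F g = F g := by
    intro g
    by_cases hg : Function.Injective g
    · rw [filter_powersetCard_eq_singleton_image hg, sum_singleton]
    · simp [F, det_submatrix_eq_zero_of_not_injective C hg]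
  calc (B * C).det = ∑ g, ∑ T ∈ powersetCard m univ with ∀ r, g r ∈ T, F g := by
        rw [det_mul_eq_sum_prod_mul_det_submatrix]
        exact (Fintype.sum_congr _ _ hfiber).symm
    _ = ∑ T ∈ powersetCard m univ, ∑ g : Fin m → ι with ∀ r, g r ∈ T, F g := by
        simp only [sum_filter]
        exact sum_comm
    _ = ∑ T ∈ powersetCard m univ, rowMinor Bᵀ T * rowMinor C T :=
        sum_congr rfl fun T hT =>
          (rowMinor_transpose_mul_rowMinor B C (mem_powersetCard.1 hT).2).symm
    _ = ∑ T : Finset ι, rowMinor Bᵀ T * rowMinor C T :=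
        sum_subset (subset_univ _) fun T _ hT => by
          rw [rowMinor_of_card_ne C fun h => hT (mem_powersetCard.2 ⟨subset_univ T, h⟩),
            mul_zero]

theorem det_sum_smul_vecMulVec [Fintype ι] (w : ι → R) (u v : ι → Fin m → R) :
    (∑ i, w i • vecMulVec (u i) (v i)).det
      = ∑ T : Finset ι, (∏ i ∈ T, w i) * (rowMinor (of u) T * rowMinor (of v) T) := by
  have hgram : ∑ i, w i • vecMulVec (u i) (v i) = (of u)ᵀ * (diagonal w * of v) := by
    ext r c
    rw [mul_apply]
    simp only [sum_apply, smul_apply, vecMulVec_apply, smul_eq_mul, transpose_apply, of_apply,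
      diagonal_mul]
    exact sum_congr rfl fun i _ => by ring
  rw [hgram, det_mul_eq_sum_rowMinor_mul_rowMinor, transpose_transpose]
  exact sum_congr rfl fun T _ => by rw [rowMinor_diagonal_mul, mul_left_comm]

theorem sum_mul_det_sum_vecMulVec [Fintype ι] (μ : Finset ι → R) (u v : ι → Fin m → R) :
    ∑ S, μ S * (∑ i ∈ S, vecMulVec (u i) (v i)).det
      = ∑ T, (∑ S with T ⊆ S, μ S) * (rowMinor (of u) T * rowMinor (of v) T) := by
  have hindicator : ∀ S : Finset ι, ∑ i ∈ S, vecMulVec (u i) (v i)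
      = ∑ i, (if i ∈ S then 1 else 0 : R) • vecMulVec (u i) (v i) := fun S => by
    simp only [ite_smul, one_smul, zero_smul, sum_ite_mem, univ_inter]
  simp only [hindicator, det_sum_smul_vecMulVec, prod_boole, mul_sum, sum_filter, sum_mul]
  rw [sum_comm]
  refine sum_congr rfl fun T _ => sum_congr rfl fun S _ => ?_
  have hsubset : (∀ i ∈ T, i ∈ S) ↔ T ⊆ S := Iff.rfl
  simp only [hsubset, ite_mul, one_mul, zero_mul, mul_ite, mul_zero]

end Matrix

theorem stmt2_general (m n : ℕ)
    (a : Fin n → Fin m → ℝ) (x : Fin n → ℝ)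
    (α : ℝ)
    (μ : Finset (Fin n) → ℝ)
    (hcorr : ∀ T : Finset (Fin n), T.card = m →
      ∑ S ∈ Finset.univ.filter (fun S : Finset (Fin n) => T ⊆ S), μ S
        ≥ α ^ m * ∏ i ∈ T, x i) :
    ∑ S : Finset (Fin n), μ S * (∑ i ∈ S, vecMulVec (a i) (a i)).det
      ≥ α ^ m * (∑ i, x i • vecMulVec (a i) (a i)).det := by
  set D : Finset (Fin n) → ℝ := fun T => rowMinor (of a) T * rowMinor (of a) T
  calc ∑ S, μ S * (∑ i ∈ S, vecMulVec (a i) (a i)).det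
      = ∑ T, (∑ S with T ⊆ S, μ S) * D T := sum_mul_det_sum_vecMulVec μ a a
    _ ≥ ∑ T, (α ^ m * ∏ i ∈ T, x i) * D T := by
        refine sum_le_sum fun T _ => ?_
        by_cases hT : #T = m
        · exact mul_le_mul_of_nonneg_right (hcorr T hT) (mul_self_nonneg _)
        · simp [D, rowMinor_of_card_ne _ hT]
    _ = α ^ m * (∑ i, x i • vecMulVec (a i) (a i)).det := by
        rw [det_sum_smul_vecMulVec, mul_sum]
        exact sum_congr rfl fun T _ => mul_assoc _ _ _

/-- An `m`-wise `α`-positively correlated distribution on the size-`k` subsets of `[n]`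
yields an `α^m` approximation in expectation of the relaxed determinant objective. -/
theorem stmt2 (m k n : ℕ) (hm : 1 ≤ m) (hmk : m ≤ k) (hkn : k ≤ n)
    (a : Fin n → Fin m → ℝ) (x : Fin n → ℝ)
    (hx : ∀ i, x i ∈ Set.Icc (0 : ℝ) 1) (hxs : ∑ i, x i = (k : ℝ))
    (α : ℝ) (hα : α ∈ Set.Icc (0 : ℝ) 1)
    (μ : Finset (Fin n) → ℝ)
    (hμ0 : ∀ S, μ S ∈ Set.Icc (0 : ℝ) 1)
    (hμ1 : ∑ S : Finset (Fin n), μ S = 1)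
    (hsupp : ∀ S, μ S ≠ 0 → S.card = k)
    (hcorr : ∀ T : Finset (Fin n), T.card = m →
      ∑ S ∈ Finset.univ.filter (fun S : Finset (Fin n) => T ⊆ S), μ S
        ≥ α ^ m * ∏ i ∈ T, x i) :
    ∑ S : Finset (Fin n), μ S * (∑ i ∈ S, vecMulVec (a i) (a i)).det
      ≥ α ^ m * (∑ i, x i • vecMulVec (a i) (a i)).det :=
  stmt2_general m n a x α μ hcorr
end

section
/- Let m, k, n be integers with 1 ≤ m ≤ k ≤ n and m < n. Then for every real y with mk/n ≤ y ≤ m, Σ_{τ=0}^{m} [C(n−m, k−τ) / ((n−m)^{m−τ} · C(n−m, k−m))] · [C(m,τ)/m^τ] · (k−y)^{m−τ} · y^τ ≤ (min{e, 1 + k/(k−m+1)})^m; consequently g(m,n,k)^{1/m} ≤ min{e, 1 + k/(k−m+1)}, where g(m,n,k) denotes the maximum of the left-hand side over y ∈ [mk/n, m]. -/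
open Matrix Finset

/-- `gval m n k` is the maximum over `y ∈ [mk/n, m]` of the bounding function
appearing in the analysis of the proportional sampling algorithm. -/
noncomputable def gval (m n k : ℕ) : ℝ :=
  sSup ((fun y : ℝ => ∑ τ ∈ Finset.range (m + 1),
      (((n - m).choose (k - τ) : ℝ)
          / (((n - m : ℕ) : ℝ) ^ (m - τ) * ((n - m).choose (k - m) : ℝ)))
        * ((m.choose τ : ℝ) / (m : ℝ) ^ τ)
        * ((k : ℝ) - y) ^ (m - τ) * y ^ τ) ''
    Set.Icc ((m * k : ℝ) / (n : ℝ)) (m : ℝ))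

/-!
Write `N = n - m`, `c = k - m` and `s = m - τ`, so that `k - τ = c + s`. Comparing falling
factorials gives `C(N, c+s) / (N^s C(N, c)) ≤ c! / (c+s)! ≤ (c+1)^{-s}`.
With the second bound the sum is dominated termwise by the binomial expansion of
`(y/m + (k-y)/(k-m+1))^m ≤ (1 + k/(k-m+1))^m`. With the first, together with
`C(m, τ)/m^τ ≤ 1/τ!` and `(x + c)^s c!/(c+s)! ≤ e^x` for `x = m - y`, the `τ`-th term is at most
`y^τ/τ! · e^{m-y}`, so the sum is at most `e^y e^{m-y} = e^m`.
-/

open Real Nat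

theorem Nat.descFactorial_add_le_pow_mul (N c s : ℕ) :
    N.descFactorial (c + s) ≤ N ^ s * N.descFactorial c := by
  rw [← Nat.descFactorial_mul_descFactorial (Nat.le_add_right c s), Nat.add_sub_cancel_left]
  gcongr
  exact (Nat.descFactorial_le_pow _ _).trans (Nat.pow_le_pow_left (Nat.sub_le N c) s)

theorem Nat.choose_mul_pow_mul_factorial_mul_factorial_le (c s j : ℕ) :
    s.choose j * c ^ (s - j) * c ! * j ! ≤ (c + s)! := by
  rcases le_or_gt j s with hjs | hsj
  · calc s.choose j * c ^ (s - j) * c ! * j !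
        = s.descFactorial j * (c ! * c ^ (s - j)) := by
          rw [Nat.descFactorial_eq_factorial_mul_choose]; ring
      _ ≤ (c + s).descFactorial j * (c + s - j)! := by
          gcongr
          · omega
          · calc c ! * c ^ (s - j) ≤ c ! * (c + 1) ^ (s - j) := by gcongr; omega
              _ ≤ (c + (s - j))! := Nat.factorial_mul_pow_le_factorial
              _ = (c + s - j)! := by rw [Nat.add_sub_assoc hjs]
      _ = (c + s)! := by rw [mul_comm, Nat.factorial_mul_descFactorial (by omega)]
  · simp [Nat.choose_eq_zero_of_lt hsj]

theorem choose_add_div_pow_mul_choose_le (N c s : ℕ) :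
    (N.choose (c + s) : ℝ) / ((N : ℝ) ^ s * N.choose c) ≤ (c ! : ℝ) / (c + s)! := by
  rcases (by positivity : (0 : ℝ) ≤ (N : ℝ) ^ s * N.choose c).eq_or_lt with hzero | hpos
  · rw [← hzero, div_zero]; positivity
  · have h := Nat.descFactorial_add_le_pow_mul N c s
    rw [Nat.descFactorial_eq_factorial_mul_choose, Nat.descFactorial_eq_factorial_mul_choose] at h
    rw [div_le_div_iff₀ hpos (by positivity)]
    calc (N.choose (c + s) : ℝ) * (c + s)! = (((c + s)! * N.choose (c + s) : ℕ) : ℝ) := by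
          push_cast; ring
      _ ≤ ((N ^ s * (c ! * N.choose c) : ℕ) : ℝ) := by exact_mod_cast h
      _ = c ! * ((N : ℝ) ^ s * N.choose c) := by push_cast; ring

theorem factorial_div_factorial_add_le_inv_pow (c s : ℕ) :
    (c ! : ℝ) / (c + s)! ≤ (((c : ℝ) + 1) ^ s)⁻¹ := by
  rw [div_le_iff₀ (by positivity), inv_mul_eq_div, le_div_iff₀ (by positivity)]
  exact_mod_cast Nat.factorial_mul_pow_le_factorial

theorem choose_div_pow_le_inv_factorial (m τ : ℕ) :
    (m.choose τ : ℝ) / (m : ℝ) ^ τ ≤ (τ ! : ℝ)⁻¹ := by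
  refine div_le_of_le_mul₀ (by positivity) (by positivity) ?_
  rw [inv_mul_eq_div]
  exact Nat.choose_le_pow_div τ m

theorem add_pow_mul_factorial_div_le_exp {x : ℝ} (hx : 0 ≤ x) (c s : ℕ) :
    (x + c) ^ s * ((c ! : ℝ) / (c + s)!) ≤ exp x :=
  calc (x + c) ^ s * ((c ! : ℝ) / (c + s)!)
      = ∑ j ∈ range (s + 1), x ^ j * ((s.choose j * c ^ (s - j) * c ! : ℕ) / (c + s)! : ℝ) := by
        rw [add_pow, sum_mul]
        refine sum_congr rfl fun j _ => ?_
        push_cast; ring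
    _ ≤ ∑ j ∈ range (s + 1), x ^ j / j ! := by
        refine sum_le_sum fun j _ => ?_
        rw [div_eq_mul_inv (x ^ j)]
        gcongr
        rw [div_le_iff₀ (by positivity), inv_mul_eq_div, le_div_iff₀ (by positivity)]
        exact_mod_cast Nat.choose_mul_pow_mul_factorial_mul_factorial_le c s j
    _ ≤ exp x := sum_le_exp_of_nonneg hx _

noncomputable def boundingTerm (m n k : ℕ) (y : ℝ) (τ : ℕ) : ℝ :=
  (((n - m).choose (k - τ) : ℝ) / (((n - m : ℕ) : ℝ) ^ (m - τ) * ((n - m).choose (k - m) : ℝ)))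
    * ((m.choose τ : ℝ) / (m : ℝ) ^ τ) * ((k : ℝ) - y) ^ (m - τ) * y ^ τ

noncomputable def boundingSum (m n k : ℕ) (y : ℝ) : ℝ :=
  ∑ τ ∈ range (m + 1), boundingTerm m n k y τ

section

variable {m n k τ : ℕ} {y : ℝ}

theorem boundingTerm_le_exp (hmk : m ≤ k) (hτ : τ ≤ m) (hy0 : 0 ≤ y) (hym : y ≤ m) :
    boundingTerm m n k y τ ≤ y ^ τ / τ ! * exp (m - y) := by
  have hk : k - τ = (k - m) + (m - τ) := by omega
  have hky : (k : ℝ) - y = (m - y) + ((k - m : ℕ) : ℝ) := by rw [Nat.cast_sub hmk]; ring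
  have hA := choose_add_div_pow_mul_choose_le (n - m) (k - m) (m - τ)
  have hE := add_pow_mul_factorial_div_le_exp (sub_nonneg.2 hym) (k - m) (m - τ)
  rw [boundingTerm, hk, hky]
  calc _ ≤ (k - m)! / (k - m + (m - τ))! * (τ ! : ℝ)⁻¹
          * ((m - y) + ((k - m : ℕ) : ℝ)) ^ (m - τ) * y ^ τ := by
        gcongr
        exact choose_div_pow_le_inv_factorial m τ
    _ = y ^ τ / τ ! * (((m - y) + ((k - m : ℕ) : ℝ)) ^ (m - τ)
          * ((k - m)! / (k - m + (m - τ))!)) := by ring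
    _ ≤ y ^ τ / τ ! * exp (m - y) := by gcongr

theorem boundingTerm_le_binomial (hmk : m ≤ k) (hτ : τ ≤ m) (hy0 : 0 ≤ y) (hyk : y ≤ k) :
    boundingTerm m n k y τ ≤ (y / m) ^ τ * ((k - y) / (k - m + 1)) ^ (m - τ) * m.choose τ := by
  have hk : k - τ = (k - m) + (m - τ) := by omega
  have hA := (choose_add_div_pow_mul_choose_le (n - m) (k - m) (m - τ)).trans
    (factorial_div_factorial_add_le_inv_pow (k - m) (m - τ))
  rw [Nat.cast_sub hmk] at hA
  rw [boundingTerm, hk]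
  calc _ ≤ (((k : ℝ) - m + 1) ^ (m - τ))⁻¹ * ((m.choose τ : ℝ) / (m : ℝ) ^ τ)
          * ((k : ℝ) - y) ^ (m - τ) * y ^ τ := by
        gcongr
    _ = _ := by rw [div_pow, div_pow]; ring

theorem boundingTerm_nonneg (hy0 : 0 ≤ y) (hyk : y ≤ k) : 0 ≤ boundingTerm m n k y τ :=
  mul_nonneg (mul_nonneg (by positivity) (pow_nonneg (sub_nonneg.2 hyk) _)) (pow_nonneg hy0 _)

theorem boundingSum_nonneg (hy0 : 0 ≤ y) (hyk : y ≤ k) : 0 ≤ boundingSum m n k y :=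
  sum_nonneg fun _ _ => boundingTerm_nonneg hy0 hyk

theorem boundingSum_le_exp_one_pow (hmk : m ≤ k) (hy0 : 0 ≤ y) (hym : y ≤ m) :
    boundingSum m n k y ≤ exp 1 ^ m :=
  calc boundingSum m n k y ≤ ∑ τ ∈ range (m + 1), y ^ τ / τ ! * exp (m - y) :=
        sum_le_sum fun _ hτ =>
          boundingTerm_le_exp hmk (Nat.lt_succ_iff.1 (mem_range.1 hτ)) hy0 hym
    _ = (∑ τ ∈ range (m + 1), y ^ τ / τ !) * exp (m - y) := (sum_mul _ _ _).symm
    _ ≤ exp y * exp (m - y) := by gcongr; exact sum_le_exp_of_nonneg hy0 _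
    _ = exp 1 ^ m := by rw [← exp_add, add_sub_cancel, exp_one_pow]

theorem boundingSum_le_one_add_pow (hmk : m ≤ k) (hy0 : 0 ≤ y) (hym : y ≤ m) :
    boundingSum m n k y ≤ (1 + k / (k - m + 1)) ^ m := by
  have hmk' : (m : ℝ) ≤ k := by exact_mod_cast hmk
  calc boundingSum m n k y
      ≤ ∑ τ ∈ range (m + 1), (y / m) ^ τ * ((k - y) / (k - m + 1)) ^ (m - τ) * m.choose τ :=
        sum_le_sum fun _ hτ => boundingTerm_le_binomial hmk
          (Nat.lt_succ_iff.1 (mem_range.1 hτ)) hy0 (hym.trans hmk')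
    _ = (y / m + (k - y) / (k - m + 1)) ^ m := (add_pow _ _ _).symm
    _ ≤ (1 + k / (k - m + 1)) ^ m := by
        have : (0 : ℝ) < k - m + 1 := by linarith
        have : (0 : ℝ) ≤ k - y := by linarith
        gcongr
        · exact div_le_one_of_le₀ hym (Nat.cast_nonneg m)
        · linarith

theorem boundingSum_le_min_pow (hmk : m ≤ k) (hy0 : 0 ≤ y) (hym : y ≤ m) :
    boundingSum m n k y ≤ min (exp 1) (1 + k / (k - m + 1)) ^ m := by
  rcases min_choice (exp 1) (1 + (k : ℝ) / (k - m + 1)) with h | h <;> rw [h]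
  · exact boundingSum_le_exp_one_pow hmk hy0 hym
  · exact boundingSum_le_one_add_pow hmk hy0 hym

end

theorem sSup_rpow_one_div_le_of_le_pow {s : Set ℝ} {M : ℝ} {m : ℕ} (hm : m ≠ 0) (hM : 0 ≤ M)
    (hs0 : ∀ x ∈ s, 0 ≤ x) (hsM : ∀ x ∈ s, x ≤ M ^ m) : sSup s ^ (1 / (m : ℝ)) ≤ M :=
  calc sSup s ^ (1 / (m : ℝ)) ≤ (M ^ m) ^ ((m : ℝ)⁻¹) := by
        rw [one_div]
        exact rpow_le_rpow (Real.sSup_nonneg hs0) (Real.sSup_le hsM (by positivity))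
          (by positivity)
    _ = M := pow_rpow_inv_natCast hM hm

theorem stmt4_general (m k n : ℕ) (hm : 1 ≤ m) (hmk : m ≤ k) :
    (∀ y : ℝ, (m * k : ℝ) / (n : ℝ) ≤ y → y ≤ (m : ℝ) →
      ∑ τ ∈ Finset.range (m + 1),
          (((n - m).choose (k - τ) : ℝ)
              / (((n - m : ℕ) : ℝ) ^ (m - τ) * ((n - m).choose (k - m) : ℝ)))
            * ((m.choose τ : ℝ) / (m : ℝ) ^ τ)
            * ((k : ℝ) - y) ^ (m - τ) * y ^ τ
        ≤ (min (Real.exp 1) (1 + (k : ℝ) / ((k : ℝ) - (m : ℝ) + 1))) ^ m)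
    ∧ gval m n k ^ ((1 : ℝ) / (m : ℝ))
        ≤ min (Real.exp 1) (1 + (k : ℝ) / ((k : ℝ) - (m : ℝ) + 1)) := by
  have hmk' : (m : ℝ) ≤ k := by exact_mod_cast hmk
  have hy0 : ∀ y : ℝ, (m * k : ℝ) / n ≤ y → 0 ≤ y := fun _ => (div_nonneg (by positivity) n.cast_nonneg).trans
  have hM : 1 ≤ min (exp 1) (1 + (k : ℝ) / (k - m + 1)) :=
    le_min (one_le_exp zero_le_one) (le_add_of_nonneg_right (div_nonneg (by positivity)
      (by linarith)))
  refine ⟨fun y hy hym => boundingSum_le_min_pow hmk (hy0 y hy) hym, ?_⟩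
  refine sSup_rpow_one_div_le_of_le_pow (by omega) (zero_le_one.trans hM) ?_ ?_ <;>
    rw [Set.forall_mem_image]
  · exact fun y hy => boundingSum_nonneg (hy0 y hy.1) (hy.2.trans hmk')
  · exact fun y hy => boundingSum_le_min_pow hmk (hy0 y hy.1) hy.2

/-- The bounding function is at most `(min{e, 1 + k/(k-m+1)})^m` on `[mk/n, m]`;
consequently `g(m,n,k)^{1/m} ≤ min{e, 1 + k/(k-m+1)}`. -/
theorem stmt4 (m k n : ℕ) (hm : 1 ≤ m) (hmk : m ≤ k) (hkn : k ≤ n) (hmn : m < n) :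
    (∀ y : ℝ, (m * k : ℝ) / (n : ℝ) ≤ y → y ≤ (m : ℝ) →
      ∑ τ ∈ Finset.range (m + 1),
          (((n - m).choose (k - τ) : ℝ)
              / (((n - m : ℕ) : ℝ) ^ (m - τ) * ((n - m).choose (k - m) : ℝ)))
            * ((m.choose τ : ℝ) / (m : ℝ) ^ τ)
            * ((k : ℝ) - y) ^ (m - τ) * y ^ τ
        ≤ (min (Real.exp 1) (1 + (k : ℝ) / ((k : ℝ) - (m : ℝ) + 1))) ^ m)
    ∧ gval m n k ^ ((1 : ℝ) / (m : ℝ))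
        ≤ min (Real.exp 1) (1 + (k : ℝ) / ((k : ℝ) - (m : ℝ) + 1)) :=
  stmt4_general m k n hm hmk
end

section
/- Let m ≤ k ≤ n be positive integers, let A = [a_1,…,a_n] be the m×n real matrix with columns a_i, let x̂ ∈ [0,1]^n, and let S ⊆ [n] with |S| = s ≤ k. In the polynomial ring ℝ[t₁,t₂,t₃], set y_i = t₃ for i ∈ S and y_i = x̂_i t₂ for i ∉ S, and define F(t₁,t₂,t₃) = det(I_n + t₁ · AᵀA · diag(y) + diag(y)) (which equals det(I_n + t₁ diag(y)^{1/2} AᵀA diag(y)^{1/2} + diag(y)) since determinants are invariant under similarity). Then the coefficient of the monomial t₁^m t₂^{k−s} t₃^{s} in F equals Σ_{R ⊆ [n], |R| = m, |R∖S| ≤ k−s} (∏_{j∈R∖S} x̂_j) · det(Σ_{i∈R} a_i a_iᵀ) · Σ_{W ⊆ [n]∖(S∪R), |W| = k−s−|R∖S|} ∏_{j∈W} x̂_j. -/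
open Matrix Finset MvPolynomial

/-!
Since `I + diag(y) = diag(1 + y)`, expanding `det(diag(1 + y) + t₁ B diag(y))` in principal minors
and `∏_{i ∉ P} (1 + y_i)` as a sum over subsets `U` of the complement gives
`F = ∑_{P ∩ U = ∅} t₁^|P| det B_P ∏_{i ∈ P ∪ U} y_i`, a sum of monomials. Such a term contributes to
`t₁^m t₂^(k-s) t₃^s` exactly when `|P| = m`, `S ⊆ P ∪ U` and `|(P ∪ U) \ S| = k - s`, i.e. when
`U = (S \ P) ∪ W` with `W` as in the sum. For `|P| = m` the minor `det B_P = det (Q Qᵀ)`, where `Q`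
is the square matrix with rows `a_i` (`i ∈ P`), equals `det (Qᵀ Q) = det (∑_{i ∈ P} a_i a_iᵀ)`.
-/

namespace Matrix

theorem submatrix_mul_diagonal {ι κ α : Type*} [Fintype ι] [DecidableEq ι] [Fintype κ]
    [DecidableEq κ] [NonUnitalNonAssocSemiring α] (B : Matrix ι ι α) (y : ι → α) (f : κ → ι) :
    (B * diagonal y).submatrix f f = B.submatrix f f * diagonal (y ∘ f) := by
  ext i j
  simp [mul_diagonal]

theorem det_mul_comm_of_card_eq {m n R : Type*} [Fintype m] [Fintype n] [DecidableEq m]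
    [DecidableEq n] [CommRing R] (A : Matrix m n R) (B : Matrix n m R)
    (h : Fintype.card m = Fintype.card n) : (A * B).det = (B * A).det := by
  let e : n ≃ m := (Fintype.equivOfCardEq h).symm
  rw [← det_submatrix_equiv_self e, ← submatrix_mul_equiv A B e (Equiv.refl n) e, det_mul_comm,
    submatrix_mul_equiv B A (Equiv.refl n) e (Equiv.refl n), Equiv.coe_refl, submatrix_id_id]

theorem det_submatrix_gram {ι κ R : Type*} [DecidableEq ι] [Fintype κ] [DecidableEq κ]
    [CommRing R] (a : ι → κ → R) (P : Finset ι) (hP : #P = Fintype.card κ) :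
    ((of fun i j => ∑ l, a i l * a j l).submatrix ((↑) : P → ι) ((↑) : P → ι)).det =
      (∑ i ∈ P, vecMulVec (a i) (a i)).det := by
  let Q : Matrix P κ R := of fun i l => a i l
  have hQQt : (of fun i j => ∑ l, a i l * a j l).submatrix ((↑) : P → ι) ((↑) : P → ι) =
      Q * Qᵀ := by
    ext i j; simp [Q, mul_apply]
  have hQtQ : ∑ i ∈ P, vecMulVec (a i) (a i) = Qᵀ * Q := by
    ext l l'
    simp [Q, mul_apply, sum_apply, vecMulVec_apply, ← Finset.sum_coe_sort P]
  rw [hQQt, hQtQ, det_mul_comm_of_card_eq _ _ (by simpa using hP)]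

section

variable {ι R : Type*} [Fintype ι] [DecidableEq ι] [CommRing R]

theorem det_diagonal_add_eq_sum (d : ι → R) (M : Matrix ι ι R) :
    (diagonal d + M).det =
      ∑ T : Finset ι, (∏ i ∈ Tᶜ, d i) * (M.submatrix ((↑) : T → ι) ((↑) : T → ι)).det := by
  rw [add_comm]
  refine ((detRowAlternating : (ι → R) [⋀^ι]→ₗ[R] R).map_add_univ M (diagonal d)).trans
    (sum_congr rfl fun T _ => ?_)
  have hrows : T.piecewise M (diagonal d) =
      fun i => (if i ∈ Tᶜ then d i else 1) • T.piecewise M.row (1 : Matrix ι ι R).row i := by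
    funext i j
    by_cases hi : i ∈ T <;> simp [hi, Finset.piecewise, diagonal_apply, one_apply, Matrix.row]
  rw [hrows, AlternatingMap.map_smul_univ, prod_ite_mem, univ_inter, smul_eq_mul,
    ← det_piecewise_one_eq_submatrix_det]
  rfl

theorem det_one_add_smul_mul_diagonal_add_diagonal (c : R) (B : Matrix ι ι R) (y : ι → R) :
    (1 + c • (B * diagonal y) + diagonal y).det =
      ∑ P : Finset ι, ∑ U ∈ Pᶜ.powerset,
        c ^ #P * (B.submatrix ((↑) : P → ι) ((↑) : P → ι)).det * ∏ i ∈ P ∪ U, y i := by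
  have hdiag : 1 + c • (B * diagonal y) + diagonal y =
      diagonal (fun i => 1 + y i) + c • (B * diagonal y) := by
    rw [add_right_comm, ← diagonal_one, diagonal_add]
  rw [hdiag, det_diagonal_add_eq_sum]
  refine sum_congr rfl fun P _ => ?_
  rw [submatrix_smul, Pi.smul_apply, Pi.smul_apply, det_smul, submatrix_mul_diagonal, det_mul,
    det_diagonal, Fintype.card_coe, Function.comp_def, prod_coe_sort P y, prod_one_add, sum_mul]
  refine sum_congr rfl fun U hU => ?_
  rw [prod_union (disjoint_of_subset_right (mem_powerset.mp hU) disjoint_compl_right)]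
  ring

end

end Matrix

namespace Finset

variable {ι R : Type*} [Fintype ι] [DecidableEq ι] [CommSemiring R]

theorem sum_filter_powerset_compl (S P : Finset ι) (r : ℕ) (f : ι → R)
    (hr : #(P \ S) ≤ r) :
    ∑ U ∈ Pᶜ.powerset with #((P ∪ U) \ S) = r ∧ S ⊆ P ∪ U, ∏ i ∈ (P ∪ U) \ S, f i =
      (∏ i ∈ P \ S, f i) * ∑ W ∈ (S ∪ P)ᶜ.powersetCard (r - #(P \ S)), ∏ i ∈ W, f i := by
  have hdisj : ∀ U ⊆ Pᶜ, Disjoint (P \ S) (U \ S) := fun U hU =>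
    (disjoint_compl_right.mono_right hU).mono sdiff_subset sdiff_subset
  rw [mul_sum]
  refine sum_nbij' (fun U => U \ S) (fun W => (S \ P) ∪ W) ?_ ?_ ?_ ?_ ?_
  · intro U hU
    simp only [mem_filter, mem_powerset] at hU
    obtain ⟨hUP, hcard, -⟩ := hU
    rw [union_sdiff_distrib, card_union_of_disjoint (hdisj U hUP)] at hcard
    simp only [mem_powersetCard, subset_iff, mem_sdiff, mem_compl, mem_union]
    refine ⟨fun i hi => ?_, by omega⟩
    have := @hUP i
    simp only [mem_compl] at this
    tauto
  · intro W hW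
    simp only [mem_powersetCard, subset_iff, mem_compl, mem_union, not_or] at hW
    obtain ⟨hWSP, hcard⟩ := hW
    have hunion : (P ∪ (S \ P ∪ W)) \ S = (P \ S) ∪ W := by grind
    have hdisjW : Disjoint (P \ S) W :=
      disjoint_right.mpr fun i hi => by simp [(hWSP hi).2]
    simp only [mem_filter, mem_powerset, subset_iff, mem_compl, mem_union, mem_sdiff]
    refine ⟨fun i hi => ?_, ?_, fun i hi => ?_⟩
    · grind
    · rw [hunion, card_union_of_disjoint hdisjW, hcard]; omega
    · tauto
  · intro U hU
    simp only [mem_filter, mem_powerset, subset_iff, mem_compl, mem_union] at hU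
    grind
  · intro W hW
    simp only [mem_powersetCard, subset_iff, mem_compl, mem_union] at hW
    grind
  · intro U hU
    simp only [mem_filter, mem_powerset] at hU
    rw [union_sdiff_distrib, prod_union (hdisj U hU.1)]

theorem sum_powerset_compl_ite (S P : Finset ι) (r : ℕ) (f : ι → R) :
    ∑ U ∈ Pᶜ.powerset, (if #((P ∪ U) \ S) = r ∧ S ⊆ P ∪ U then ∏ i ∈ (P ∪ U) \ S, f i else 0) =
      if #(P \ S) ≤ r then
        (∏ i ∈ P \ S, f i) * ∑ W ∈ (S ∪ P)ᶜ.powersetCard (r - #(P \ S)), ∏ i ∈ W, f i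
      else 0 := by
  rw [← sum_filter]
  split_ifs with hr
  · exact sum_filter_powerset_compl S P r f hr
  · refine sum_eq_zero fun U hU => absurd ?_ hr
    rw [(mem_filter.mp hU).2.1.symm]
    exact card_le_card (sdiff_subset_sdiff subset_union_left le_rfl)

end Finset

theorem Finsupp.single_add_single_add_single_eq_iff {a b c a' b' c' : ℕ} :
    Finsupp.single (0 : Fin 3) a + Finsupp.single 1 b + Finsupp.single 2 c =
        Finsupp.single 0 a' + Finsupp.single 1 b' + Finsupp.single 2 c' ↔
      a = a' ∧ b = b' ∧ c = c' := by
  simp [Finsupp.ext_iff, Fin.forall_fin_succ]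

namespace MvPolynomial

variable {ι R : Type*} [CommSemiring R]

theorem prod_ite_X_eq_monomial {σ : Type*} [DecidableEq ι] (S V : Finset ι) (u v : σ)
    (x : ι → R) :
    ∏ i ∈ V, (if i ∈ S then X v else C (x i) * X u : MvPolynomial σ R) =
      monomial (Finsupp.single u #(V \ S) + Finsupp.single v #(V ∩ S)) (∏ i ∈ V \ S, x i) := by
  rw [prod_ite, filter_mem_eq_inter, filter_notMem_eq_sdiff, prod_const, prod_mul_distrib,
    prod_const, ← map_prod, X_pow_eq_monomial, X_pow_eq_monomial, C_mul_monomial, mul_comm,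
    monomial_mul, mul_one, mul_one]

theorem coeff_sum_powerset_compl [Fintype ι] [DecidableEq ι] (S : Finset ι) (x : ι → R)
    (d : Finset ι → R) (m r : ℕ) :
    coeff (Finsupp.single 0 m + Finsupp.single 1 r + Finsupp.single 2 #S)
        (∑ P : Finset ι, ∑ U ∈ Pᶜ.powerset, X 0 ^ #P * C (d P) *
          ∏ i ∈ P ∪ U, (if i ∈ S then X 2 else C (x i) * X 1 : MvPolynomial (Fin 3) R)) =
      ∑ P ∈ univ.powersetCard m with #(P \ S) ≤ r,
        (∏ i ∈ P \ S, x i) * d P *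
          ∑ W ∈ (univ \ (S ∪ P)).powersetCard (r - #(P \ S)), ∏ i ∈ W, x i := by
  have hterm : ∀ P V : Finset ι, X 0 ^ #P * C (d P) *
      ∏ i ∈ V, (if i ∈ S then X 2 else C (x i) * X 1 : MvPolynomial (Fin 3) R) =
      monomial (Finsupp.single 0 #P + Finsupp.single 1 #(V \ S) + Finsupp.single 2 #(V ∩ S))
        (d P * ∏ i ∈ V \ S, x i) := by
    intro P V
    rw [prod_ite_X_eq_monomial, X_pow_eq_monomial, mul_comm (monomial _ 1), C_mul_monomial,
      mul_one, monomial_mul, add_assoc]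
  have hcover : ∀ V : Finset ι, #(V ∩ S) = #S ↔ S ⊆ V := fun V =>
    ⟨fun h => eq_of_subset_of_card_le inter_subset_right h.ge ▸ inter_subset_left,
      fun h => by rw [inter_eq_right.mpr h]⟩
  simp only [hterm, coeff_sum, coeff_monomial, Finsupp.single_add_single_add_single_eq_iff, hcover]
  rw [powersetCard_eq_filter, powerset_univ, sum_filter, sum_filter]
  refine sum_congr rfl fun P _ => ?_
  by_cases hP : #P = m
  · simp only [hP, true_and, if_true]
    simp_rw [← mul_ite_zero, ← mul_sum]
    rw [sum_powerset_compl_ite, compl_eq_univ_sdiff]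
    split_ifs <;> ring
  · simp [hP]

end MvPolynomial

theorem stmt7_general (m k n : ℕ)
    (a : Fin n → Fin m → ℝ) (x : Fin n → ℝ)
    (S : Finset (Fin n)) (s : ℕ) (hs : S.card = s) :
    let y : Fin n → MvPolynomial (Fin 3) ℝ := fun i =>
      if i ∈ S then MvPolynomial.X 2 else MvPolynomial.C (x i) * MvPolynomial.X 1
    let B : Matrix (Fin n) (Fin n) (MvPolynomial (Fin 3) ℝ) :=
      Matrix.of fun i j => MvPolynomial.C (∑ l, a i l * a j l)
    let F : MvPolynomial (Fin 3) ℝ :=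
      (1 + (MvPolynomial.X 0 : MvPolynomial (Fin 3) ℝ) • (B * Matrix.diagonal y) + Matrix.diagonal y).det
    MvPolynomial.coeff
        (Finsupp.single (0 : Fin 3) m + Finsupp.single (1 : Fin 3) (k - s)
          + Finsupp.single (2 : Fin 3) s) F
      = ∑ R ∈ (Finset.univ.powersetCard m).filter
            (fun R : Finset (Fin n) => (R \ S).card ≤ k - s),
          (∏ j ∈ R \ S, x j) * (∑ i ∈ R, vecMulVec (a i) (a i)).det *
            ∑ W ∈ (Finset.univ \ (S ∪ R)).powersetCard (k - s - (R \ S).card),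
              ∏ j ∈ W, x j := by
  intro y B F
  subst hs
  have hminor : ∀ P : Finset (Fin n), (B.submatrix ((↑) : P → Fin n) (↑)).det =
      C ((of fun i j => ∑ l, a i l * a j l).submatrix ((↑) : P → Fin n) (↑)).det := fun P => by
    rw [RingHom.map_det]; rfl
  calc coeff _ F = coeff (Finsupp.single 0 m + Finsupp.single 1 (k - #S) + Finsupp.single 2 #S)
        (∑ P : Finset (Fin n), ∑ U ∈ Pᶜ.powerset, X 0 ^ #P *
          C ((of fun i j => ∑ l, a i l * a j l).submatrix ((↑) : P → Fin n) (↑)).det *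
            ∏ i ∈ P ∪ U, y i) := by
        simp only [F, det_one_add_smul_mul_diagonal_add_diagonal, hminor]
    _ = _ := coeff_sum_powerset_compl S x _ m (k - #S)
    _ = _ := sum_congr rfl fun P hP => by
        rw [det_submatrix_gram a P (by simpa using (mem_filter.mp hP).1)]

/-- The coefficient of `t₁^m t₂^{k-s} t₃^s` in
`F(t₁,t₂,t₃) = det(I + t₁ AᵀA diag(y) + diag(y))`, where `y_i = t₃` for `i ∈ S` and
`y_i = x̂_i t₂` otherwise, equals the conditional-expectation sum used in the
derandomization of the sampling algorithm. -/
theorem stmt7 (m k n : ℕ) (hm : 1 ≤ m) (hmk : m ≤ k) (hkn : k ≤ n)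
    (a : Fin n → Fin m → ℝ) (x : Fin n → ℝ) (hx : ∀ i, x i ∈ Set.Icc (0 : ℝ) 1)
    (S : Finset (Fin n)) (s : ℕ) (hs : S.card = s) (hsk : s ≤ k) :
    let y : Fin n → MvPolynomial (Fin 3) ℝ := fun i =>
      if i ∈ S then MvPolynomial.X 2 else MvPolynomial.C (x i) * MvPolynomial.X 1
    let B : Matrix (Fin n) (Fin n) (MvPolynomial (Fin 3) ℝ) :=
      Matrix.of fun i j => MvPolynomial.C (∑ l, a i l * a j l)
    let F : MvPolynomial (Fin 3) ℝ :=
      (1 + (MvPolynomial.X 0 : MvPolynomial (Fin 3) ℝ) • (B * Matrix.diagonal y) + Matrix.diagonal y).det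
    MvPolynomial.coeff
        (Finsupp.single (0 : Fin 3) m + Finsupp.single (1 : Fin 3) (k - s)
          + Finsupp.single (2 : Fin 3) s) F
      = ∑ R ∈ (Finset.univ.powersetCard m).filter
            (fun R : Finset (Fin n) => (R \ S).card ≤ k - s),
          (∏ j ∈ R \ S, x j) * (∑ i ∈ R, vecMulVec (a i) (a i)).det *
            ∑ W ∈ (Finset.univ \ (S ∪ R)).powersetCard (k - s - (R \ S).card),
              ∏ j ∈ W, x j :=
  stmt7_general m k n a x S s hs
end

section
/- Let m ≤ k ≤ n be positive integers, ε > 0 with εk > (1+ε)m, and x ∈ [0,1]^n with Σ_{i∈[n]} x_i = k. Set p_i = x_i/(1+ε) and, for S ⊆ [n], P(S) = ∏_{i∈S} p_i · ∏_{i∉S} (1 − p_i) (the independent Bernoulli product measure). Then for every T ⊆ [n] with |T| = m: Σ_{S : T ⊆ S, |S| ≤ k} P(S) ≥ (1+ε)^{−m} · (1 − exp(−(εk − (1+ε)m)² / (k(2+ε)(1+ε)))) · ∏_{i∈T} x_i · Σ_{S : |S| ≤ k} P(S). Moreover, if ε ∈ (0,1) and k ≥ 4m/ε + (12/ε²)·log(1/ε),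 then (1+ε)^{−m} · (1 − exp(−(εk − (1+ε)m)² / (k(2+ε)(1+ε)))) ≥ (1−ε)^m, so the conditional probability Pr[T ⊆ 𝒮 | |𝒮| ≤ k] is at least (1−ε)^m ∏_{i∈T} x_i. -/
/-!
Conditioning on `T ⊆ 𝒮` factors out `∏_{i ∈ T} p_i = (1+ε)^{-m} ∏_{i ∈ T} x_i` and leaves the
event `|𝒮 \ T| ≤ k - m` for the independent sample `𝒮 \ T ⊆ Tᶜ`, whose mean is at most
`μ = k/(1+ε)`. The Chernoff bound, with the optimal parameter `t = log (c/μ)` and the estimate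
`log (c/μ) ≥ 2(c-μ)/(c+μ)`, gives `Pr[|𝒮 \ T| > c] ≤ exp (-(c-μ)²/(c+μ))` for `c = k - m`, and
the claimed exponent is smaller. Since `Pr[|𝒮| ≤ k] ≤ 1`, the first bound follows. Under the
condition on `k` the exponent is at least `2 log (1/ε)`, so the exponential is at most `ε²`, and
`(1 - ε²) / (1 + ε)^m ≥ (1 - ε)^m`.
-/

open Finset Real

theorem two_mul_sub_div_add_le_log_div {c μ : ℝ} (hμ : 0 < μ) (hμc : μ ≤ c) :
    2 * (c - μ) / (c + μ) ≤ log (c / μ) := by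
  have hcμ : 0 < c + μ := by linarith
  set u := (c - μ) / (c + μ) with hu
  have hu0 : 0 ≤ u := div_nonneg (by linarith) hcμ.le
  have hu1 : |u| < 1 := by
    rw [abs_of_nonneg hu0, div_lt_one hcμ]; linarith
  -- the first term of the series `log ((1 + u) / (1 - u)) = 2 ∑ u ^ (2j+1) / (2j+1)`
  have hfirst := le_hasSum (hasSum_log_sub_log_of_abs_lt_one hu1) 0
    fun j _ ↦ by positivity
  have hquot : (1 + u) / (1 - u) = c / μ := by
    rw [hu]; field_simp [hμ.ne']; ring
  rw [← log_div (by positivity) (by linarith [(abs_lt.1 hu1).2]), hquot] at hfirst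
  simpa [hu, mul_div_assoc] using hfirst

section BernoulliWeight

variable {ι : Type*} [DecidableEq ι] (p : ι → ℝ)

/-- The probability that the sample from `A`, containing each `i` independently with
probability `p i`, equals `U`. -/
def bernoulliWeight (A U : Finset ι) : ℝ :=
  (∏ i ∈ U, p i) * ∏ i ∈ A \ U, (1 - p i)

variable {p}

theorem bernoulliWeight_nonneg (hp : ∀ i, p i ∈ Set.Icc 0 1) (A U : Finset ι) :
    0 ≤ bernoulliWeight p A U :=
  mul_nonneg (prod_nonneg fun i _ ↦ (hp i).1) (prod_nonneg fun i _ ↦ sub_nonneg.2 (hp i).2)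

variable (p)

theorem sum_powerset_bernoulliWeight (A : Finset ι) :
    ∑ U ∈ A.powerset, bernoulliWeight p A U = 1 := by
  simp [bernoulliWeight, ← prod_add]

theorem sum_powerset_bernoulliWeight_mul_exp_card (A : Finset ι) (t : ℝ) :
    ∑ U ∈ A.powerset, bernoulliWeight p A U * exp (t * #U) =
      ∏ i ∈ A, (p i * exp t + (1 - p i)) := by
  rw [prod_add]
  refine sum_congr rfl fun U _ ↦ ?_
  rw [bernoulliWeight, prod_mul_distrib, prod_const, ← exp_nat_mul]
  ring_nf

variable {p}

theorem sum_bernoulliWeight_card_gt_le_exp (hp : ∀ i, p i ∈ Set.Icc 0 1) (A : Finset ι)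
    {K : ℕ} {t μ : ℝ} (ht : 0 ≤ t) (hμ : ∑ i ∈ A, p i ≤ μ) :
    ∑ U ∈ A.powerset with K < #U, bernoulliWeight p A U ≤ exp (μ * (exp t - 1) - t * K) := by
  have hw := bernoulliWeight_nonneg hp A
  calc ∑ U ∈ A.powerset with K < #U, bernoulliWeight p A U
      ≤ ∑ U ∈ A.powerset with K < #U, bernoulliWeight p A U * exp (t * #U) * exp (-(t * K)) := by
        refine sum_le_sum fun U hU ↦ ?_
        rw [mul_assoc, ← exp_add]
        refine le_mul_of_one_le_right (hw U) (one_le_exp ?_)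
        have : (K : ℝ) ≤ #U := by exact_mod_cast (mem_filter.1 hU).2.le
        nlinarith
    _ ≤ (∑ U ∈ A.powerset, bernoulliWeight p A U * exp (t * #U)) * exp (-(t * K)) := by
        rw [sum_mul]
        exact sum_le_sum_of_subset_of_nonneg (filter_subset _ _)
          fun U _ _ ↦ by have := hw U; positivity
    _ ≤ (∏ i ∈ A, exp (p i * (exp t - 1))) * exp (-(t * K)) := by
        rw [sum_powerset_bernoulliWeight_mul_exp_card]
        gcongr ?_ * _
        exact prod_le_prod (fun i _ ↦ by nlinarith [(hp i).1, (hp i).2, one_le_exp ht])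
          fun i _ ↦ by linarith [add_one_le_exp (p i * (exp t - 1))]
    _ ≤ exp (μ * (exp t - 1) - t * K) := by
        rw [← exp_sum, ← sum_mul, ← exp_add, exp_le_exp]
        nlinarith [one_le_exp ht]

theorem sum_bernoulliWeight_card_gt_le (hp : ∀ i, p i ∈ Set.Icc 0 1) (A : Finset ι)
    {K : ℕ} {μ : ℝ} (hμ0 : 0 < μ) (hμ : ∑ i ∈ A, p i ≤ μ) (hμK : μ ≤ K) :
    ∑ U ∈ A.powerset with K < #U, bernoulliWeight p A U ≤ exp (-((K - μ) ^ 2 / (K + μ))) := by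
  have hK : (0 : ℝ) < K := hμ0.trans_le hμK
  -- the optimal Chernoff parameter `t = log (K / μ)`
  have hlog := two_mul_sub_div_add_le_log_div hμ0 hμK
  refine (sum_bernoulliWeight_card_gt_le_exp hp A
    (log_nonneg ((one_le_div hμ0).2 hμK)) hμ).trans (exp_le_exp.2 ?_)
  rw [exp_log (by positivity)]
  have hexponent : (K - μ) ^ 2 / (K + μ) = K * (2 * (K - μ) / (K + μ)) - (K - μ) := by
    field_simp; ring
  have hmean : μ * (K / μ - 1) = K - μ := by field_simp
  rw [hexponent, hmean]
  linarith [mul_le_mul_of_nonneg_left hlog hK.le]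

theorem one_sub_exp_le_sum_bernoulliWeight_card_le (hp : ∀ i, p i ∈ Set.Icc 0 1)
    (A : Finset ι) {K : ℕ} {μ : ℝ} (hμ0 : 0 < μ) (hμ : ∑ i ∈ A, p i ≤ μ) (hμK : μ ≤ K) :
    1 - exp (-((K - μ) ^ 2 / (K + μ))) ≤ ∑ U ∈ A.powerset with #U ≤ K, bernoulliWeight p A U := by
  have hsplit := sum_filter_add_sum_filter_not A.powerset (fun U ↦ #U ≤ K) (bernoulliWeight p A)
  simp only [not_le] at hsplit
  linarith [sum_powerset_bernoulliWeight p A, sum_bernoulliWeight_card_gt_le hp A hμ0 hμ hμK]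

variable [Fintype ι] (p)

theorem bernoulliWeight_univ (S : Finset ι) :
    bernoulliWeight p univ S = (∏ i ∈ S, p i) * ∏ i ∈ Sᶜ, (1 - p i) := by
  rw [bernoulliWeight, compl_eq_univ_sdiff]

theorem bernoulliWeight_univ_of_subset {T S : Finset ι} (h : T ⊆ S) :
    bernoulliWeight p univ S = (∏ i ∈ T, p i) * bernoulliWeight p Tᶜ (S \ T) := by
  have hcompl : univ \ S = Tᶜ \ (S \ T) := by
    ext i; simp only [mem_sdiff, mem_univ, mem_compl, true_and]; tauto
  rw [bernoulliWeight, bernoulliWeight, hcompl, ← prod_sdiff h]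
  ring

theorem sum_superset_bernoulliWeight_univ (T : Finset ι) {k : ℕ} (hTk : #T ≤ k) :
    ∑ S with T ⊆ S ∧ #S ≤ k, bernoulliWeight p univ S =
      (∏ i ∈ T, p i) * ∑ U ∈ Tᶜ.powerset with #U ≤ k - #T, bernoulliWeight p Tᶜ U := by
  rw [mul_sum]
  refine sum_nbij' (· \ T) (· ∪ T) ?_ ?_ ?_ ?_ ?_
  · intro S hS
    simp only [mem_filter, mem_univ, true_and, mem_powerset] at hS ⊢
    refine ⟨fun i hi ↦ mem_compl.2 (mem_sdiff.1 hi).2, ?_⟩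
    rw [card_sdiff_of_subset hS.1]
    omega
  · intro U hU
    simp only [mem_filter, mem_univ, true_and, mem_powerset] at hU ⊢
    rw [subset_compl_iff_disjoint_right] at hU
    refine ⟨subset_union_right, ?_⟩
    rw [card_union_of_disjoint hU.1]
    omega
  · intro S hS
    exact sdiff_union_of_subset (mem_filter.1 hS).2.1
  · intro U hU
    simp only [mem_filter, mem_powerset, subset_compl_iff_disjoint_right] at hU
    exact union_sdiff_cancel_right hU.1
  · intro S hS
    exact bernoulliWeight_univ_of_subset p (mem_filter.1 hS).2.1

variable {p}

theorem le_sum_superset_bernoulliWeight_univ (hp : ∀ i, p i ∈ Set.Icc 0 1) {T : Finset ι}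
    {k : ℕ} {μ : ℝ} (hTk : #T ≤ k) (hμ0 : 0 < μ) (hμ : ∑ i ∈ Tᶜ, p i ≤ μ)
    (hμk : μ ≤ (k - #T : ℕ)) :
    (∏ i ∈ T, p i) * (1 - exp (-(((k - #T : ℕ) - μ) ^ 2 / ((k - #T : ℕ) + μ)))) *
        ∑ S with #S ≤ k, bernoulliWeight p univ S ≤
      ∑ S with T ⊆ S ∧ #S ≤ k, bernoulliWeight p univ S := by
  have hmass : ∑ S with #S ≤ k, bernoulliWeight p univ S ≤ 1 := by
    rw [← sum_powerset_bernoulliWeight p univ, powerset_univ]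
    exact sum_le_sum_of_subset_of_nonneg (filter_subset _ _)
      fun S _ _ ↦ bernoulliWeight_nonneg hp univ S
  rw [sum_superset_bernoulliWeight_univ p T hTk, mul_assoc]
  gcongr
  · exact prod_nonneg fun i _ ↦ (hp i).1
  · have hG : 0 ≤ 1 - exp (-(((k - #T : ℕ) - μ) ^ 2 / ((k - #T : ℕ) + μ))) :=
      sub_nonneg.2 (exp_le_one_iff.2 (neg_nonpos.2 (by positivity)))
    exact (mul_le_of_le_one_right hG hmass).trans
      (one_sub_exp_le_sum_bernoulliWeight_card_le hp Tᶜ hμ0 hμ hμk)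

end BernoulliWeight

theorem sq_div_le_chernoff_exponent {k m ε : ℝ} (hm : 0 ≤ m) (hε : 0 < ε)
    (hεk : (1 + ε) * m < ε * k) :
    (ε * k - (1 + ε) * m) ^ 2 / (k * (2 + ε) * (1 + ε)) ≤
      (k - m - k / (1 + ε)) ^ 2 / (k - m + k / (1 + ε)) := by
  have hε1 : 0 < 1 + ε := by linarith
  have hsum : 0 < (2 + ε) * k - (1 + ε) * m := by nlinarith
  have hrw : (k - m - k / (1 + ε)) ^ 2 / (k - m + k / (1 + ε)) =
      (ε * k - (1 + ε) * m) ^ 2 / ((1 + ε) * ((2 + ε) * k - (1 + ε) * m)) := by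
    field_simp
    ring
  rw [hrw]
  exact div_le_div_of_nonneg_left (sq_nonneg _) (by positivity)
    (by nlinarith [mul_nonneg (mul_nonneg hε1.le hε1.le) hm])

theorem two_mul_log_one_div_le {k m ε : ℝ} (hm : 0 ≤ m) (hε0 : 0 < ε) (hε1 : ε < 1) (hk : 0 < k)
    (hkε : 4 * m / ε + 12 / ε ^ 2 * log (1 / ε) ≤ k) :
    2 * log (1 / ε) ≤ (ε * k - (1 + ε) * m) ^ 2 / (k * (2 + ε) * (1 + ε)) := by
  set L := log (1 / ε)
  have hL : 0 ≤ L := log_nonneg ((one_le_div hε0).2 hε1.le)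
  have hkε' : 4 * m * ε + 12 * L ≤ ε ^ 2 * k := by
    have := mul_le_mul_of_nonneg_left hkε (sq_nonneg ε)
    rwa [mul_add, show ε ^ 2 * (4 * m / ε) = 4 * m * ε by field_simp,
      show ε ^ 2 * (12 / ε ^ 2 * L) = 12 * L by field_simp] at this
  have h4m : 4 * m ≤ ε * k := by nlinarith
  -- `(ε k - 2m)² ≥ k (ε² k - 4 m ε) ≥ 12 L k`
  have hsq : 12 * L * k ≤ (ε * k - 2 * m) ^ 2 := by nlinarith
  have hgap : ε * k - 2 * m ≤ ε * k - (1 + ε) * m := by nlinarith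
  rw [le_div_iff₀ (by positivity)]
  nlinarith [mul_le_mul_of_nonneg_left (show (2 + ε) * (1 + ε) ≤ 6 by nlinarith) (mul_nonneg hL hk.le)]

theorem one_sub_pow_le_inv_one_add_pow_mul {ε : ℝ} (hε0 : 0 < ε) (hε1 : ε < 1) {m : ℕ}
    (hm : m ≠ 0) {X : ℝ} (hX : 2 * log (1 / ε) ≤ X) :
    (1 - ε) ^ m ≤ ((1 + ε) ^ m)⁻¹ * (1 - exp (-X)) := by
  have hexp : exp (-X) ≤ ε ^ 2 := by
    calc exp (-X) ≤ exp (2 * log ε) := by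
          rw [exp_le_exp]; rw [one_div, log_inv] at hX; linarith
      _ = ε ^ 2 := by rw [two_mul, exp_add, exp_log hε0, sq]
  rw [inv_mul_eq_div, le_div_iff₀ (by positivity), ← mul_pow,
    show (1 - ε) * (1 + ε) = 1 - ε ^ 2 by ring]
  calc (1 - ε ^ 2) ^ m ≤ 1 - ε ^ 2 := pow_le_of_le_one (by nlinarith) (by nlinarith) hm
    _ ≤ 1 - exp (-X) := by linarith

theorem stmt8_general (m k n : ℕ) (hm : 1 ≤ m) (hmk : m ≤ k)
    (ε : ℝ) (hε : 0 < ε) (hεk : (1 + ε) * (m : ℝ) < ε * (k : ℝ))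
    (x : Fin n → ℝ) (hx : ∀ i, x i ∈ Set.Icc (0 : ℝ) 1) (hxs : ∑ i, x i = (k : ℝ)) :
    (∀ T : Finset (Fin n), T.card = m →
      ∑ S ∈ Finset.univ.filter (fun S : Finset (Fin n) => T ⊆ S ∧ S.card ≤ k),
          ((∏ i ∈ S, x i / (1 + ε)) * ∏ i ∈ Sᶜ, (1 - x i / (1 + ε)))
        ≥ ((1 + ε) ^ m)⁻¹
            * (1 - Real.exp (-(ε * k - (1 + ε) * m) ^ 2 / (k * (2 + ε) * (1 + ε))))
            * (∏ i ∈ T, x i)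
            * ∑ S ∈ Finset.univ.filter (fun S : Finset (Fin n) => S.card ≤ k),
                ((∏ i ∈ S, x i / (1 + ε)) * ∏ i ∈ Sᶜ, (1 - x i / (1 + ε))))
    ∧ (ε < 1 → (k : ℝ) ≥ 4 * m / ε + 12 / ε ^ 2 * Real.log (1 / ε) →
        ((1 + ε) ^ m)⁻¹
            * (1 - Real.exp (-(ε * k - (1 + ε) * m) ^ 2 / (k * (2 + ε) * (1 + ε))))
          ≥ (1 - ε) ^ m) := by
  have hε1 : 0 < 1 + ε := by linarith
  have hk : (0 : ℝ) < k := by exact_mod_cast (show 0 < k by omega)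
  simp only [neg_div, ge_iff_le]
  refine ⟨fun T hT ↦ ?_, fun hε_lt hkε ↦ ?_⟩
  · have hp : ∀ i, x i / (1 + ε) ∈ Set.Icc 0 1 := fun i ↦
      ⟨div_nonneg (hx i).1 hε1.le, (div_le_one hε1).2 (by linarith [(hx i).2])⟩
    have hμ : ∑ i ∈ Tᶜ, x i / (1 + ε) ≤ k / (1 + ε) := by
      rw [← hxs, sum_div]
      exact sum_le_univ_sum_of_nonneg fun i ↦ (hp i).1
    have hK : ((k - #T : ℕ) : ℝ) = k - m := by rw [hT, Nat.cast_sub hmk]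
    have hμK : k / (1 + ε) ≤ k - m := by rw [div_le_iff₀ hε1]; linarith
    have key := le_sum_superset_bernoulliWeight_univ hp (hT ▸ hmk) (by positivity) hμ
      (hK ▸ hμK)
    rw [hK] at key
    simp only [bernoulliWeight_univ] at key
    have hpT : ∏ i ∈ T, x i / (1 + ε) = ((1 + ε) ^ m)⁻¹ * ∏ i ∈ T, x i := by
      rw [prod_div_distrib, prod_const, hT, div_eq_inv_mul]
    rw [mul_right_comm ((1 + ε) ^ m)⁻¹, ← hpT]
    refine le_trans ?_ key
    have hW : 0 ≤ ∑ S with #S ≤ k, (∏ i ∈ S, x i / (1 + ε)) * ∏ i ∈ Sᶜ, (1 - x i / (1 + ε)) :=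
      sum_nonneg fun S _ ↦ bernoulliWeight_univ _ S ▸ bernoulliWeight_nonneg hp univ S
    gcongr _ * (1 - exp (-?_)) * _
    · exact prod_nonneg fun i _ ↦ (hp i).1
    · exact sq_div_le_chernoff_exponent m.cast_nonneg hε hεk
  · exact one_sub_pow_le_inv_one_add_pow_mul hε hε_lt (by omega)
      (two_mul_log_one_div_le m.cast_nonneg hε hε_lt hk hkε)

/-- Chernoff-type positive-correlation bound for the independent Bernoulli sampling with
inflated-down marginals `p_i = x_i/(1+ε)`: the probability that `T ⊆ 𝒮` and `|𝒮| ≤ k`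
is at least the stated factor times `∏_{i∈T} x_i · Pr[|𝒮| ≤ k]`; moreover, when
`ε ∈ (0,1)` and `k ≥ 4m/ε + (12/ε²) log(1/ε)` the factor is at least `(1-ε)^m`. -/
theorem stmt8 (m k n : ℕ) (hm : 1 ≤ m) (hmk : m ≤ k) (hkn : k ≤ n)
    (ε : ℝ) (hε : 0 < ε) (hεk : (1 + ε) * (m : ℝ) < ε * (k : ℝ))
    (x : Fin n → ℝ) (hx : ∀ i, x i ∈ Set.Icc (0 : ℝ) 1) (hxs : ∑ i, x i = (k : ℝ)) :
    (∀ T : Finset (Fin n), T.card = m →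
      ∑ S ∈ Finset.univ.filter (fun S : Finset (Fin n) => T ⊆ S ∧ S.card ≤ k),
          ((∏ i ∈ S, x i / (1 + ε)) * ∏ i ∈ Sᶜ, (1 - x i / (1 + ε)))
        ≥ ((1 + ε) ^ m)⁻¹
            * (1 - Real.exp (-(ε * k - (1 + ε) * m) ^ 2 / (k * (2 + ε) * (1 + ε))))
            * (∏ i ∈ T, x i)
            * ∑ S ∈ Finset.univ.filter (fun S : Finset (Fin n) => S.card ≤ k),
                ((∏ i ∈ S, x i / (1 + ε)) * ∏ i ∈ Sᶜ, (1 - x i / (1 + ε))))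
    ∧ (ε < 1 → (k : ℝ) ≥ 4 * m / ε + 12 / ε ^ 2 * Real.log (1 / ε) →
        ((1 + ε) ^ m)⁻¹
            * (1 - Real.exp (-(ε * k - (1 + ε) * m) ^ 2 / (k * (2 + ε) * (1 + ε))))
          ≥ (1 - ε) ^ m) :=
  stmt8_general m k n hm hmk ε hε hεk x hx hxs
end

section
/- Let ε ∈ (0,1), let m ≤ k ≤ n be positive integers with k ≥ 4m/ε + (12/ε²)·log(1/ε), and let a_1,…,a_n ∈ ℝ^m. For every x ∈ [0,1]^n with Σ_{i∈[n]} x_i = k there exists a subset S ⊆ [n] with |S| = k such that det(Σ_{i∈S} a_i a_iᵀ) ≥ (1−ε)^m · det(Σ_{i∈[n]} x_i a_i a_iᵀ); hence the D-optimal design problem without repetitions admits a (1−ε)-approximation. -/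
/-!
Sample `s ⊆ [n]` by keeping each `i` independently with probability `q i = (1 - ε/2) x i`.
By Cauchy–Binet, `det (∑ i ∈ s, a i a iᵀ) = ∑_{T ⊆ s, |T| = m} det (a_T)²` is monotone in `s`,
and `det (∑ q i a i a iᵀ) = ∑_T (∏_{i ∈ T} q i) det (a_T)²`. The event `T ⊆ s` has probability
`∏_{i ∈ T} q i`, and independently of it the rest of `s` has more than `k - m` elements only with
probability `η ≤ exp ((1 - ε/2) k (e^{ε/2} - 1) - (ε/2) (k - m))` (Chernoff). Hence the expectation
of `det (∑ i ∈ s, a i a iᵀ) · [|s| ≤ k]` is at least `(1 - η) (1 - ε/2)^m det (∑ x i a i a iᵀ)`,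
and a best `s` with `|s| ≤ k`, padded to size `k`, does at least as well. The lower bound on `k`
gives `η ≤ (ε/2) / (1 - ε/2) ≤ 1 - ((1 - ε) / (1 - ε/2))^m`, i.e. `(1 - η) (1 - ε/2)^m ≥ (1 - ε)^m`.
-/

open Matrix Finset Real

def minorSq {ι R : Type*} [LinearOrder ι] [CommRing R] {m : ℕ} (a : ι → Fin m → R)
    (T : Finset ι) : R :=
  if h : T.card = m then (of fun j => a (T.orderEmbOfFin h j)).det ^ 2 else 0

lemma minorSq_nonneg {ι R : Type*} [LinearOrder ι] [CommRing R] [LinearOrder R]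
    [IsStrictOrderedRing R] {m : ℕ} (a : ι → Fin m → R) (T : Finset ι) : 0 ≤ minorSq a T := by
  unfold minorSq
  split <;> positivity

lemma det_sum_smul_vecMulVec_eq_sum_pi {ι R : Type*} [CommRing R] [Fintype ι] [DecidableEq ι]
    {m : ℕ} (a : ι → Fin m → R) (w : ι → R) :
    (∑ i, w i • vecMulVec (a i) (a i)).det
      = ∑ f : Fin m → ι, (∏ j, w (f j) * a (f j) j) * (of fun j => a (f j)).det := by
  have hrows : ∑ i, w i • vecMulVec (a i) (a i) = of fun j => ∑ i, (w i * a i j) • a i := by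
    ext j j'
    simp [Matrix.sum_apply, vecMulVec, mul_comm, mul_left_comm]
  have hsum := (detRowAlternating (R := R) (n := Fin m)).toMultilinearMap.map_sum
    (fun j i => (w i * a i j) • a i)
  simp only [AlternatingMap.coe_multilinearMap, MultilinearMap.map_smul_univ] at hsum
  rw [hrows]
  exact hsum

lemma sum_injective_image_eq_sum_perm {ι M : Type*} [Fintype ι] [LinearOrder ι]
    [AddCommMonoid M] {m : ℕ} (T : Finset ι) (h : T.card = m) (g : (Fin m → ι) → M) :
    ∑ f : Fin m → ι with Function.Injective f ∧ univ.image f = T, g f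
      = ∑ σ : Equiv.Perm (Fin m), g (T.orderEmbOfFin h ∘ σ) := by
  set e := T.orderIsoOfFin h
  have mem_of (f : Fin m → ι) (hf : univ.image f = T) (j : Fin m) : f j ∈ T :=
    hf ▸ mem_image_of_mem f (mem_univ j)
  symm
  refine sum_bij' (fun σ _ => T.orderEmbOfFin h ∘ σ)
    (fun f hf => Equiv.ofBijective (fun j => e.symm ⟨f j, mem_of f (mem_filter.mp hf).2.2 j⟩)
        (Finite.injective_iff_bijective.mp fun j₁ j₂ hj =>
          (mem_filter.mp hf).2.1 (congrArg Subtype.val (e.symm.injective hj))))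
    ?_ (fun _ _ => mem_univ _) ?_ ?_ (fun _ _ => rfl)
  · intro σ _
    simp only [mem_filter, mem_univ, true_and]
    refine ⟨(T.orderEmbOfFin h).injective.comp σ.injective, ?_⟩
    rw [← image_image, image_univ_equiv, image_orderEmbOfFin_univ]
  · intro σ _
    ext j
    simp [e, ← coe_orderIsoOfFin_apply]
  · intro f _
    ext j
    simp [e, ← coe_orderIsoOfFin_apply]

lemma sum_perm_eq_prod_mul_minorSq {ι R : Type*} [CommRing R] [LinearOrder ι] {m : ℕ}
    (a : ι → Fin m → R) (w : ι → R) (T : Finset ι) (h : T.card = m) :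
    ∑ σ : Equiv.Perm (Fin m), (∏ j, w (T.orderEmbOfFin h (σ j)) * a (T.orderEmbOfFin h (σ j)) j)
        * (of fun j => a (T.orderEmbOfFin h (σ j))).det
      = (∏ i ∈ T, w i) * minorSq a T := by
  set e := T.orderEmbOfFin h
  set N : Matrix (Fin m) (Fin m) R := of fun j => a (e j)
  have hw (σ : Equiv.Perm (Fin m)) : ∏ j, w (e (σ j)) = ∏ i ∈ T, w i := by
    rw [Equiv.prod_comp σ (fun j => w (e j)), ← image_orderEmbOfFin_univ T h,
      prod_image fun x _ y _ hxy => e.injective hxy]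
  have hdet (σ : Equiv.Perm (Fin m)) :
      (of fun j => a (e (σ j))).det = Equiv.Perm.sign σ * N.det :=
    det_permute σ N
  have hN : ∑ σ : Equiv.Perm (Fin m), (Equiv.Perm.sign σ : R) * ∏ j, a (e (σ j)) j = N.det := by
    simp [det_apply, N, Units.smul_def, zsmul_eq_mul]
  simp only [prod_mul_distrib, hw, hdet, minorSq, dif_pos h]
  rw [← hN, sq, sum_mul, mul_sum]
  refine sum_congr rfl fun σ _ => ?_
  ring

lemma det_sum_smul_vecMulVec_eq_sum_minorSq {ι R : Type*} [CommRing R] [Fintype ι]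
    [LinearOrder ι] {m : ℕ} (a : ι → Fin m → R) (w : ι → R) :
    (∑ i, w i • vecMulVec (a i) (a i)).det
      = ∑ T ∈ powersetCard m univ, (∏ i ∈ T, w i) * minorSq a T := by
  set g : (Fin m → ι) → R := fun f => (∏ j, w (f j) * a (f j) j) * (of fun j => a (f j)).det
  have hg : ∀ f, f ∉ ({f | Function.Injective f} : Finset _) → g f = 0 := by
    intro f hf
    obtain ⟨j₁, j₂, hval, hne⟩ := Function.not_injective_iff.mp (by simpa using hf)
    have hdet : (of fun j => a (f j)).det = 0 := det_zero_of_row_eq hne (congrArg a hval)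
    simp only [g, hdet, mul_zero]
  rw [det_sum_smul_vecMulVec_eq_sum_pi, ← sum_subset (subset_univ _) fun f _ hf => hg f hf,
    ← sum_fiberwise_of_maps_to (t := powersetCard m univ) (g := fun f => univ.image f)]
  · refine sum_congr rfl fun T hT => ?_
    have h := (mem_powersetCard_univ.mp hT)
    rw [filter_filter, sum_injective_image_eq_sum_perm T h]
    exact sum_perm_eq_prod_mul_minorSq a w T h
  · intro f hf
    rw [mem_powersetCard_univ, card_image_of_injective _ (mem_filter.mp hf).2, card_fin]

section subsetDet

variable {ι : Type*} [Fintype ι] [LinearOrder ι] {m : ℕ}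

lemma det_sum_vecMulVec_eq_sum_minorSq {R : Type*} [CommRing R] (a : ι → Fin m → R)
    (s : Finset ι) :
    (∑ i ∈ s, vecMulVec (a i) (a i)).det = ∑ T ∈ powersetCard m s, minorSq a T := by
  have hind : ∑ i ∈ s, vecMulVec (a i) (a i)
      = ∑ i, (if i ∈ s then (1 : R) else 0) • vecMulVec (a i) (a i) := by
    simp [ite_smul, sum_ite_mem]
  rw [hind, det_sum_smul_vecMulVec_eq_sum_minorSq]
  simp only [prod_boole, ite_mul, one_mul, zero_mul, ← sum_filter]
  congr 1
  ext T
  simp [mem_powersetCard, subset_iff, and_comm]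

lemma det_sum_vecMulVec_nonneg (a : ι → Fin m → ℝ) (s : Finset ι) :
    0 ≤ (∑ i ∈ s, vecMulVec (a i) (a i)).det := by
  rw [det_sum_vecMulVec_eq_sum_minorSq]
  exact sum_nonneg fun T _ => minorSq_nonneg a T

lemma det_sum_smul_vecMulVec_nonneg (a : ι → Fin m → ℝ) {w : ι → ℝ} (hw : ∀ i, 0 ≤ w i) :
    0 ≤ (∑ i, w i • vecMulVec (a i) (a i)).det := by
  rw [det_sum_smul_vecMulVec_eq_sum_minorSq]
  exact sum_nonneg fun T _ => mul_nonneg (prod_nonneg fun i _ => hw i) (minorSq_nonneg a T)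

lemma det_sum_vecMulVec_mono (a : ι → Fin m → ℝ) {s t : Finset ι} (hst : s ⊆ t) :
    (∑ i ∈ s, vecMulVec (a i) (a i)).det ≤ (∑ i ∈ t, vecMulVec (a i) (a i)).det := by
  rw [det_sum_vecMulVec_eq_sum_minorSq, det_sum_vecMulVec_eq_sum_minorSq]
  exact sum_le_sum_of_subset_of_nonneg (powersetCard_mono hst) fun T _ _ => minorSq_nonneg a T

lemma exists_card_eq_forall_card_le_det_le (a : ι → Fin m → ℝ) {k : ℕ}
    (hk : k ≤ Fintype.card ι) :
    ∃ S : Finset ι, S.card = k ∧ ∀ s : Finset ι, s.card ≤ k →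
      (∑ i ∈ s, vecMulVec (a i) (a i)).det ≤ (∑ i ∈ S, vecMulVec (a i) (a i)).det := by
  obtain ⟨S, hS, hmax⟩ := exists_max_image (powersetCard k univ)
    (fun S => (∑ i ∈ S, vecMulVec (a i) (a i)).det) (powersetCard_nonempty.mpr (by simpa))
  refine ⟨S, mem_powersetCard_univ.mp hS, fun s hs => ?_⟩
  obtain ⟨t, hst, ht⟩ := exists_superset_card_eq hs hk
  exact (det_sum_vecMulVec_mono a hst).trans (hmax t (mem_powersetCard_univ.mpr ht))

end subsetDet

/-- The probability that keeping each `i ∈ F` independently with probability `q i` yields `s`. -/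
noncomputable def subsetWeight {ι : Type*} [DecidableEq ι] (q : ι → ℝ) (F s : Finset ι) : ℝ :=
  (∏ i ∈ s, q i) * ∏ i ∈ F \ s, (1 - q i)

section subsetWeight

variable {ι : Type*} [DecidableEq ι] {q : ι → ℝ}

lemma subsetWeight_nonneg (hq0 : ∀ i, 0 ≤ q i) (hq1 : ∀ i, q i ≤ 1) (F s : Finset ι) :
    0 ≤ subsetWeight q F s :=
  mul_nonneg (prod_nonneg fun i _ => hq0 i) (prod_nonneg fun i _ => sub_nonneg.mpr (hq1 i))

lemma sum_subsetWeight_powerset (q : ι → ℝ) (F : Finset ι) :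
    ∑ s ∈ F.powerset, subsetWeight q F s = 1 := by
  simp [subsetWeight, ← prod_add]

lemma sum_subsetWeight_mul_le (hq0 : ∀ i, 0 ≤ q i) (hq1 : ∀ i, q i ≤ 1) (F : Finset ι)
    (p : Finset ι → Prop) [DecidablePred p] {f : Finset ι → ℝ} {M : ℝ}
    (hf : ∀ s ⊆ F, p s → f s ≤ M) (hM : 0 ≤ M) :
    ∑ s ∈ F.powerset with p s, subsetWeight q F s * f s ≤ M :=
  calc ∑ s ∈ F.powerset with p s, subsetWeight q F s * f s
      ≤ ∑ s ∈ F.powerset, subsetWeight q F s * M := by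
        refine sum_le_sum_of_subset_of_nonneg (filter_subset _ _) (fun s _ _ =>
          mul_nonneg (subsetWeight_nonneg hq0 hq1 F s) hM) |>.trans' (sum_le_sum fun s hs => ?_)
        obtain ⟨hsF, hps⟩ := mem_filter.mp hs
        exact mul_le_mul_of_nonneg_left (hf s (mem_powerset.mp hsF) hps)
          (subsetWeight_nonneg hq0 hq1 F s)
    _ = M := by rw [← sum_mul, sum_subsetWeight_powerset, one_mul]

/-- Chernoff's bound on the probability that at least `α` elements are kept, when at most `B` are
kept on average: `e^{-tα} 𝔼[e^{t |s|}] ≤ e^{-tα} ∏ (1 + q i (e^t - 1)) ≤ chernoffBound B t α`. -/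
noncomputable def chernoffBound (B t α : ℝ) : ℝ := exp (B * (exp t - 1) - t * α)

lemma sum_subsetWeight_card_ge_le (hq0 : ∀ i, 0 ≤ q i) (hq1 : ∀ i, q i ≤ 1) (F : Finset ι)
    {B t α : ℝ} (ht : 0 ≤ t) (hB : ∑ i ∈ F, q i ≤ B) :
    ∑ s ∈ F.powerset with α ≤ s.card, subsetWeight q F s ≤ chernoffBound B t α := by
  have hW := subsetWeight_nonneg hq0 hq1 F
  have markov : ∑ s ∈ F.powerset with α ≤ s.card, subsetWeight q F s
      ≤ ∑ s ∈ F.powerset, exp (-(t * α)) * (exp t ^ s.card * subsetWeight q F s) := by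
    refine (sum_le_sum fun s hs => ?_).trans (sum_le_sum_of_subset_of_nonneg (filter_subset _ _)
      fun s _ _ => by have := hW s; positivity)
    have hexp : 1 ≤ exp (-(t * α)) * exp t ^ s.card := by
      rw [← exp_nat_mul, ← exp_add, one_le_exp_iff]
      nlinarith [(mem_filter.mp hs).2]
    nlinarith [hW s]
  have mgf : ∑ s ∈ F.powerset, exp t ^ s.card * subsetWeight q F s
      = ∏ i ∈ F, (exp t * q i + (1 - q i)) := by
    simp only [prod_add, subsetWeight, prod_mul_distrib, prod_const, mul_assoc]
  have hprod : ∏ i ∈ F, (exp t * q i + (1 - q i)) ≤ exp (B * (exp t - 1)) :=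
    calc ∏ i ∈ F, (exp t * q i + (1 - q i))
        ≤ ∏ i ∈ F, exp (q i * (exp t - 1)) := by
          refine prod_le_prod (fun i _ => ?_) fun i _ => ?_
          · nlinarith [hq0 i, hq1 i, exp_nonneg t]
          · linarith [add_one_le_exp (q i * (exp t - 1))]
      _ = exp ((∑ i ∈ F, q i) * (exp t - 1)) := by rw [← exp_sum, sum_mul]
      _ ≤ exp (B * (exp t - 1)) := by
          gcongr
          linarith [one_le_exp ht]
  calc _ ≤ _ := markov
    _ ≤ exp (-(t * α)) * exp (B * (exp t - 1)) := by
        rw [← mul_sum, mgf]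
        gcongr
    _ = chernoffBound B t α := by rw [chernoffBound, ← exp_add]; ring_nf

lemma sum_subsetWeight_superset (q : ι → ℝ) {F T : Finset ι} (hTF : T ⊆ F)
    (p : Finset ι → Prop) [DecidablePred p] :
    ∑ s ∈ F.powerset with T ⊆ s ∧ p s, subsetWeight q F s
      = (∏ i ∈ T, q i) * ∑ s ∈ (F \ T).powerset with p (s ∪ T), subsetWeight q (F \ T) s := by
  rw [mul_sum]
  refine sum_bij' (fun s _ => s \ T) (fun s _ => s ∪ T) ?_ ?_ ?_ ?_ ?_
  · intro s hs
    simp only [mem_filter, mem_powerset] at hs ⊢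
    exact ⟨sdiff_subset_sdiff hs.1 subset_rfl, by rw [sdiff_union_of_subset hs.2.1]; exact hs.2.2⟩
  · intro s hs
    simp only [mem_filter, mem_powerset] at hs ⊢
    exact ⟨union_subset (hs.1.trans sdiff_subset) hTF, subset_union_right, hs.2⟩
  · intro s hs
    exact sdiff_union_of_subset (mem_filter.mp hs).2.1
  · intro s hs
    exact union_sdiff_cancel_right
      (disjoint_of_subset_left (mem_powerset.mp (mem_filter.mp hs).1) sdiff_disjoint)
  · intro s hs
    obtain ⟨hsF, hTs, -⟩ := mem_filter.mp hs
    rw [subsetWeight, subsetWeight, sdiff_sdiff_sdiff_cancel_right hTs,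
      ← prod_sdiff hTs]
    ring

lemma prod_mul_one_sub_chernoffBound_le (hq0 : ∀ i, 0 ≤ q i) (hq1 : ∀ i, q i ≤ 1)
    {F T : Finset ι} (hTF : T ⊆ F) {B t : ℝ} (ht : 0 ≤ t) (hB : ∑ i ∈ F, q i ≤ B) (k : ℕ) :
    (∏ i ∈ T, q i) * (1 - chernoffBound B t (k - T.card))
      ≤ ∑ s ∈ F.powerset with T ⊆ s ∧ s.card ≤ k, subsetWeight q F s := by
  rw [sum_subsetWeight_superset q hTF]
  gcongr
  · exact prod_nonneg fun i _ => hq0 i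
  set G := F \ T
  have hsplit := sum_filter_add_sum_filter_not G.powerset (fun s => (s ∪ T).card ≤ k)
    (subsetWeight q G)
  have hlarge : {s ∈ G.powerset | ¬(s ∪ T).card ≤ k}
      ⊆ {s ∈ G.powerset | (k - T.card : ℝ) ≤ s.card} := by
    intro s hs
    obtain ⟨hsG, hsk⟩ := mem_filter.mp hs
    have hdisj : Disjoint s T := disjoint_of_subset_left (mem_powerset.mp hsG) sdiff_disjoint
    rw [card_union_of_disjoint hdisj, not_le] at hsk
    refine mem_filter.mpr ⟨hsG, ?_⟩
    rw [sub_le_iff_le_add]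
    exact_mod_cast hsk.le
  have htail := (sum_le_sum_of_subset_of_nonneg hlarge fun s _ _ =>
    subsetWeight_nonneg hq0 hq1 G s).trans (sum_subsetWeight_card_ge_le hq0 hq1 G ht
      ((sum_le_sum_of_subset_of_nonneg sdiff_subset fun i _ _ => hq0 i).trans hB))
  rw [sum_subsetWeight_powerset] at hsplit
  linarith

end subsetWeight

lemma exp_le_cubic {v : ℝ} (h0 : 0 ≤ v) (h1 : v ≤ 1) :
    exp v ≤ 1 + v + v ^ 2 / 2 + 2 / 9 * v ^ 3 := by
  have h := exp_bound (x := v) (by rwa [abs_of_nonneg h0]) (n := 3) (by norm_num)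
  simp only [Finset.sum_range_succ, Finset.sum_range_zero, abs_of_nonneg h0] at h
  norm_num [Nat.factorial] at h
  linarith [(abs_le.mp h).2]

lemma add_sq_div_two_le_neg_log_one_sub {v : ℝ} (h0 : 0 ≤ v) (h1 : v < 1) :
    v + v ^ 2 / 2 ≤ -log (1 - v) := by
  have h := sum_le_hasSum (Finset.range 2) (fun n _ => by positivity)
    (hasSum_pow_div_log_of_abs_lt_one (by rwa [abs_of_nonneg h0]))
  norm_num [Finset.sum_range_succ] at h
  linarith

lemma log_two_le_cubic {e : ℝ} (h0 : 0 ≤ e) :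
    log 2 ≤ 3 / 4 + e / 16 - e ^ 2 / 4 + 3 / 16 * e ^ 3 := by
  nlinarith [log_two_lt_d9, mul_nonneg (sq_nonneg (e - 3 / 4)) h0]

lemma one_sub_mul_exp_sub_one_sub_le {u : ℝ} (h0 : 0 ≤ u) (h1 : u ≤ 1) :
    (1 - u) * (exp u - 1) - u ≤ -u ^ 2 / 2 - u ^ 3 / 4 := by
  have h := mul_le_mul_of_nonneg_left (exp_le_cubic h0 h1) (sub_nonneg.mpr h1)
  nlinarith [pow_nonneg h0 3, pow_nonneg h0 4]

lemma chernoff_exponent_le {ε : ℝ} (hε0 : 0 < ε) (hε1 : ε < 1) {m k : ℕ} (hm : 1 ≤ m)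
    (hk : (k : ℝ) ≥ 4 * m / ε + 12 / ε ^ 2 * log (1 / ε)) :
    (1 - ε / 2) * k * (exp (ε / 2) - 1) - ε / 2 * (k - m)
      ≤ -(3 / 2 + 3 / 8 * ε) * log (1 / ε) - ε ^ 2 / 8 := by
  set L := log (1 / ε)
  have hL : 0 ≤ L := log_nonneg (by rw [le_div_iff₀ hε0]; linarith)
  have hC := one_sub_mul_exp_sub_one_sub_le (u := ε / 2) (by positivity) (by linarith)
  have hCneg : (1 - ε / 2) * (exp (ε / 2) - 1) - ε / 2 ≤ 0 := by
    nlinarith [pow_nonneg hε0.le 3]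
  have hK : 0 ≤ 4 * (m : ℝ) / ε + 12 / ε ^ 2 * L := by positivity
  have hm1 : (1 : ℝ) ≤ m := by exact_mod_cast hm
  calc (1 - ε / 2) * k * (exp (ε / 2) - 1) - ε / 2 * (k - m)
      = k * ((1 - ε / 2) * (exp (ε / 2) - 1) - ε / 2) + ε / 2 * m := by ring
    _ ≤ (4 * m / ε + 12 / ε ^ 2 * L) * ((1 - ε / 2) * (exp (ε / 2) - 1) - ε / 2)
          + ε / 2 * m := by gcongr ?_ + _; exact mul_le_mul_of_nonpos_right hk hCneg
    _ ≤ (4 * m / ε + 12 / ε ^ 2 * L) * (-(ε / 2) ^ 2 / 2 - (ε / 2) ^ 3 / 4) + ε / 2 * m := by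
          gcongr
    _ = -(3 / 2 + 3 / 8 * ε) * L - ε ^ 2 / 8 * m := by field_simp; ring
    _ ≤ -(3 / 2 + 3 / 8 * ε) * L - ε ^ 2 / 8 := by nlinarith

lemma neg_mul_log_sub_le_log_div {ε : ℝ} (hε0 : 0 < ε) (hε1 : ε < 1) :
    -(3 / 2 + 3 / 8 * ε) * log (1 / ε) - ε ^ 2 / 8 ≤ log ((ε / 2) / (1 - ε / 2)) := by
  have hlogε := add_sq_div_two_le_neg_log_one_sub (v := 1 - ε) (by linarith) (by linarith)
  have hlogu := add_sq_div_two_le_neg_log_one_sub (v := ε / 2) (by linarith) (by linarith)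
  have hcoef : (1 - ε + (1 - ε) ^ 2 / 2) * (1 / 2 + 3 / 8 * ε) ≤ -log ε * (1 / 2 + 3 / 8 * ε) :=
    mul_le_mul_of_nonneg_right (by simpa using hlogε) (by positivity)
  rw [one_div, log_inv, log_div (by positivity) (by linarith), log_div hε0.ne' two_ne_zero]
  -- after these two bounds on logarithms the claim is `log_two_le_cubic` at `e = ε`
  nlinarith [log_two_le_cubic hε0.le]

lemma one_sub_pow_le_one_sub_chernoffBound_mul {ε : ℝ} (hε0 : 0 < ε) (hε1 : ε < 1) {m k : ℕ}
    (hm : 1 ≤ m) (hk : (k : ℝ) ≥ 4 * m / ε + 12 / ε ^ 2 * log (1 / ε)) :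
    (1 - ε) ^ m ≤ (1 - chernoffBound ((1 - ε / 2) * k) (ε / 2) (k - m)) * (1 - ε / 2) ^ m := by
  have hu : 0 < 1 - ε / 2 := by linarith
  set ρ := (1 - ε) / (1 - ε / 2)
  have hρ0 : 0 ≤ ρ := div_nonneg (by linarith) hu.le
  have hρ1 : ρ ≤ 1 := (div_le_one hu).mpr (by linarith)
  have hρu : 1 - ρ = (ε / 2) / (1 - ε / 2) := by
    rw [eq_div_iff hu.ne', sub_mul, div_mul_cancel₀ _ hu.ne']
    ring
  have hη : chernoffBound ((1 - ε / 2) * k) (ε / 2) (k - m) ≤ 1 - ρ := by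
    rw [chernoffBound, hρu, ← le_log_iff_exp_le (by positivity)]
    exact (chernoff_exponent_le hε0 hε1 hm hk).trans (neg_mul_log_sub_le_log_div hε0 hε1)
  calc (1 - ε) ^ m = ρ ^ m * (1 - ε / 2) ^ m := by rw [← mul_pow, div_mul_cancel₀ _ hu.ne']
    _ ≤ ρ * (1 - ε / 2) ^ m := by gcongr; exact pow_le_of_le_one hρ0 hρ1 (by omega)
    _ ≤ _ := by gcongr; linarith

lemma one_sub_chernoffBound_mul_det_le_sum {ι : Type*} [Fintype ι] [LinearOrder ι] {m : ℕ}
    (a : ι → Fin m → ℝ) {q : ι → ℝ} (hq0 : ∀ i, 0 ≤ q i) (hq1 : ∀ i, q i ≤ 1) {B t : ℝ}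
    (ht : 0 ≤ t) (hB : ∑ i, q i ≤ B) (k : ℕ) :
    (1 - chernoffBound B t (k - m)) * (∑ i, q i • vecMulVec (a i) (a i)).det
      ≤ ∑ s ∈ univ.powerset with s.card ≤ k,
          subsetWeight q univ s * (∑ i ∈ s, vecMulVec (a i) (a i)).det := by
  simp only [det_sum_smul_vecMulVec_eq_sum_minorSq, det_sum_vecMulVec_eq_sum_minorSq, mul_sum]
  rw [sum_comm' (t' := powersetCard m univ)
    (s' := fun T => {s ∈ univ.powerset | T ⊆ s ∧ s.card ≤ k})]
  · refine sum_le_sum fun T hT => ?_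
    have hTm := mem_powersetCard_univ.mp hT
    have hsample := prod_mul_one_sub_chernoffBound_le hq0 hq1 (subset_univ T) ht hB k
    rw [hTm] at hsample
    rw [← sum_mul, ← mul_assoc, mul_comm (1 - _)]
    exact mul_le_mul_of_nonneg_right hsample (minorSq_nonneg a T)
  · intro s T
    simp only [mem_filter, mem_powerset, mem_powersetCard, subset_univ, true_and]
    tauto

theorem stmt9_general (ε : ℝ) (hε : ε ∈ Set.Ioo (0 : ℝ) 1) (m k n : ℕ) (hm : 1 ≤ m)
    (hkn : k ≤ n)
    (hk : (k : ℝ) ≥ 4 * m / ε + 12 / ε ^ 2 * Real.log (1 / ε))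
    (a : Fin n → Fin m → ℝ) (x : Fin n → ℝ)
    (hx : ∀ i, x i ∈ Set.Icc (0 : ℝ) 1) (hxs : ∑ i, x i = (k : ℝ)) :
    ∃ S : Finset (Fin n), S.card = k ∧
      (∑ i ∈ S, vecMulVec (a i) (a i)).det
        ≥ (1 - ε) ^ m * (∑ i, x i • vecMulVec (a i) (a i)).det := by
  obtain ⟨hε0, hε1⟩ := hε
  set q : Fin n → ℝ := fun i => (1 - ε / 2) * x i
  have hq0 (i : Fin n) : 0 ≤ q i := mul_nonneg (by linarith) (hx i).1
  have hq1 (i : Fin n) : q i ≤ 1 := mul_le_one₀ (by linarith) (hx i).1 (hx i).2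
  have hqsum : ∑ i, q i = (1 - ε / 2) * k := by rw [← mul_sum, hxs]
  have hdet_q : (∑ i, q i • vecMulVec (a i) (a i)).det
      = (1 - ε / 2) ^ m * (∑ i, x i • vecMulVec (a i) (a i)).det := by
    simp only [q, mul_smul, ← smul_sum, det_smul, Fintype.card_fin]
  obtain ⟨S, hS, hmax⟩ := exists_card_eq_forall_card_le_det_le a (k := k) (by simpa using hkn)
  refine ⟨S, hS, ?_⟩
  calc (1 - ε) ^ m * (∑ i, x i • vecMulVec (a i) (a i)).det
      ≤ (1 - chernoffBound ((1 - ε / 2) * k) (ε / 2) (k - m)) * (1 - ε / 2) ^ m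
          * (∑ i, x i • vecMulVec (a i) (a i)).det := by
        gcongr
        · exact det_sum_smul_vecMulVec_nonneg a fun i => (hx i).1
        · exact one_sub_pow_le_one_sub_chernoffBound_mul hε0 hε1 hm hk
    _ ≤ ∑ s ∈ univ.powerset with s.card ≤ k,
          subsetWeight q univ s * (∑ i ∈ s, vecMulVec (a i) (a i)).det := by
        rw [mul_assoc, ← hdet_q]
        exact one_sub_chernoffBound_mul_det_le_sum a hq0 hq1 (by positivity) hqsum.le k
    _ ≤ (∑ i ∈ S, vecMulVec (a i) (a i)).det :=
        sum_subsetWeight_mul_le hq0 hq1 univ _ (fun s _ hs => hmax s hs)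
          (det_sum_vecMulVec_nonneg a S)

/-- If `k ≥ 4m/ε + (12/ε²) log(1/ε)`, the D-optimal design problem without repetitions
admits a `(1-ε)`-approximation: for every fractional solution there is a size-`k` subset
whose determinant is at least `(1-ε)^m` times the fractional determinant. -/
theorem stmt9 (ε : ℝ) (hε : ε ∈ Set.Ioo (0 : ℝ) 1) (m k n : ℕ) (hm : 1 ≤ m)
    (hmk : m ≤ k) (hkn : k ≤ n)
    (hk : (k : ℝ) ≥ 4 * m / ε + 12 / ε ^ 2 * Real.log (1 / ε))
    (a : Fin n → Fin m → ℝ) (x : Fin n → ℝ)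
    (hx : ∀ i, x i ∈ Set.Icc (0 : ℝ) 1) (hxs : ∑ i, x i = (k : ℝ)) :
    ∃ S : Finset (Fin n), S.card = k ∧
      (∑ i ∈ S, vecMulVec (a i) (a i)).det
        ≥ (1 - ε) ^ m * (∑ i, x i • vecMulVec (a i) (a i)).det :=
  stmt9_general ε hε m k n hm hkn hk a x hx hxs
end

section
/- For all integers 1 ≤ m ≤ k, one has ((k−m)! · k^m / k!)^{1/m} ≤ min{e, k/(k−m+1)}; equivalently, k!/((k−m)! k^m) ≥ max{e^{−m}, ((k−m+1)/k)^m}. -/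
lemma aux_pow_mul_factorial_le (m k : ℕ) (hmk : m ≤ k) :
    k ^ m * m.factorial ≤ m ^ m * k.descFactorial m := by
  calc k ^ m * m.factorial = ∏ i ∈ Finset.range m, (k * (m - i)) := by
        rw [Finset.prod_mul_distrib, Finset.prod_const, Finset.card_range,
          ← Nat.descFactorial_self, Nat.descFactorial_eq_prod_range]
    _ ≤ ∏ i ∈ Finset.range m, (m * (k - i)) := ?_
    _ = m ^ m * k.descFactorial m := by
        rw [Finset.prod_mul_distrib, Finset.prod_const, Finset.card_range,
          Nat.descFactorial_eq_prod_range]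
  apply Finset.prod_le_prod'
  intro i hi
  have hi' : i < m := Finset.mem_range.mp hi
  have h1 : i ≤ m := hi'.le
  have h2 : i ≤ k := h1.trans hmk
  zify [h1, h2]
  nlinarith [(Nat.cast_le (α := ℤ)).mpr hmk, (Nat.cast_nonneg i : (0:ℤ) ≤ i)]

/-- Bound on the inverse approximation factor of the multinomial sampling algorithm:
`((k-m)! k^m / k!)^{1/m} ≤ min{e, k/(k-m+1)}`, equivalently
`k!/((k-m)! k^m) ≥ max{e^{-m}, ((k-m+1)/k)^m}`. -/
theorem stmt11 (m k : ℕ) (hm : 1 ≤ m) (hmk : m ≤ k) :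
    ((((k - m).factorial : ℝ) * (k : ℝ) ^ m / (k.factorial : ℝ)) ^ ((1 : ℝ) / (m : ℝ))
        ≤ min (Real.exp 1) ((k : ℝ) / ((k : ℝ) - (m : ℝ) + 1)))
    ∧ ((k.factorial : ℝ) / (((k - m).factorial : ℝ) * (k : ℝ) ^ m)
        ≥ max (Real.exp (-(m : ℝ))) ((((k : ℝ) - (m : ℝ) + 1) / (k : ℝ)) ^ m)) := by
  have hk1 : 1 ≤ k := hm.trans hmk
  have hk : (0:ℝ) < (k:ℝ) := by exact_mod_cast hk1
  have hmR : (1:ℝ) ≤ (m:ℝ) := by exact_mod_cast hm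
  have hm0 : (m:ℝ) ≠ 0 := by positivity
  have hmkR : (m:ℝ) ≤ (k:ℝ) := by exact_mod_cast hmk
  set F : ℝ := (k.descFactorial m : ℝ) with hFdef
  have hFpos : 0 < F := by
    rw [hFdef]
    have : k.descFactorial m ≠ 0 := fun h => absurd (Nat.descFactorial_eq_zero_iff_lt.mp h) (not_lt.mpr hmk)
    exact_mod_cast Nat.pos_of_ne_zero this
  have hfacpos : (0:ℝ) < ((k - m).factorial : ℝ) := by exact_mod_cast (k - m).factorial_pos
  have hfac : ((k - m).factorial : ℝ) * F = (k.factorial : ℝ) := by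
    rw [hFdef]; exact_mod_cast congrArg (Nat.cast (R := ℝ)) (Nat.factorial_mul_descFactorial hmk)
  have hkm : (0:ℝ) < (k:ℝ) ^ m := by positivity
  set L : ℝ := (k:ℝ) - (m:ℝ) + 1 with hLdef
  have hL : 0 < L := by simp only [hLdef]; linarith
  have hcast : ((k + 1 - m : ℕ) : ℝ) = L := by
    have h : m ≤ k + 1 := hmk.trans (Nat.le_succ k)
    push_cast [h]; simp only [hLdef]; ring
  -- lower bound (a)
  have hLm : L ^ m ≤ F := by
    rw [← hcast, hFdef]
    exact_mod_cast Nat.pow_sub_le_descFactorial k m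
  -- lower bound (b): k^m ≤ exp m * F
  have hexpF : (k:ℝ) ^ m ≤ Real.exp m * F := by
    have h1 : (k:ℝ) ^ m * (m.factorial : ℝ) ≤ (m:ℝ) ^ m * F := by
      rw [hFdef]
      exact_mod_cast aux_pow_mul_factorial_le m k hmk
    have hf : (0:ℝ) < (m.factorial : ℝ) := by exact_mod_cast m.factorial_pos
    have h2 : (m:ℝ) ^ m ≤ Real.exp m * (m.factorial : ℝ) := by
      have h3 := Real.pow_div_factorial_le_exp (x := (m:ℝ)) (by positivity) m
      rw [div_le_iff₀ hf] at h3
      linarith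
    have h4 : (k:ℝ) ^ m * (m.factorial : ℝ) ≤ (Real.exp m * F) * (m.factorial : ℝ) := by
      nlinarith
    exact le_of_mul_le_mul_right h4 hf
  -- Part 2
  have hratio : (k.factorial : ℝ) / (((k - m).factorial : ℝ) * (k : ℝ) ^ m) = F / (k:ℝ) ^ m := by
    rw [← hfac]; field_simp
  have part2a : (L / (k:ℝ)) ^ m ≤ F / (k:ℝ) ^ m := by
    rw [div_pow]
    gcongr
  have part2b : Real.exp (-(m:ℝ)) ≤ F / (k:ℝ) ^ m := by
    rw [Real.exp_neg, inv_eq_one_div, div_le_div_iff₀ (Real.exp_pos _) hkm]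
    nlinarith
  have part2 : (k.factorial : ℝ) / (((k - m).factorial : ℝ) * (k : ℝ) ^ m)
      ≥ max (Real.exp (-(m : ℝ))) ((L / (k : ℝ)) ^ m) := by
    rw [hratio, ge_iff_le, max_le_iff]
    exact ⟨part2b, part2a⟩
  -- Part 1
  have hx : (((k - m).factorial : ℝ) * (k : ℝ) ^ m / (k.factorial : ℝ)) = (k:ℝ) ^ m / F := by
    rw [← hfac]; field_simp
  have hx0 : (0:ℝ) ≤ (k:ℝ) ^ m / F := by positivity
  have hxe : (k:ℝ) ^ m / F ≤ Real.exp 1 ^ m := by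
    rw [div_le_iff₀ hFpos, ← Real.exp_nat_mul, mul_one]
    exact hexpF
  have hxr : (k:ℝ) ^ m / F ≤ ((k:ℝ) / L) ^ m := by
    rw [div_pow]
    gcongr
  have key : ∀ y : ℝ, 0 ≤ y → (k:ℝ) ^ m / F ≤ y ^ m →
      ((k:ℝ) ^ m / F) ^ ((1:ℝ)/(m:ℝ)) ≤ y := by
    intro y hy hle
    have h5 : ((k:ℝ) ^ m / F) ^ ((1:ℝ)/(m:ℝ)) ≤ (y ^ m) ^ ((1:ℝ)/(m:ℝ)) :=
      Real.rpow_le_rpow hx0 hle (by positivity)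
    rwa [← Real.rpow_natCast y m, ← Real.rpow_mul hy, mul_one_div, div_self hm0,
      Real.rpow_one] at h5
  constructor
  · rw [hx, le_min_iff]
    exact ⟨key _ (Real.exp_pos 1).le hxe, key _ (by positivity) hxr⟩
  · exact part2
end

section
/- Let m ≤ k be positive integers and a_1,…,a_n ∈ ℝ^m. For every x ∈ ℝ_{≥0}^n with Σ_{i∈[n]} x_i = k there exists a count vector c : [n] → ℕ with Σ_{i∈[n]} c_i = k such that det(Σ_{i∈[n]} c_i a_i a_iᵀ) ≥ e^{−m} · det(Σ_{i∈[n]} x_i a_i a_iᵀ); hence the D-optimal design problem with repetitions admits a (1/e)-approximation. -/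
/-!
Randomized rounding. Draw `k` indices independently with probabilities `x i / k` and let `c i`
count how often `i` is drawn, so that `∑ c i a i a iᵀ = ∑ⱼ a (w j) a (w j)ᵀ` for the drawn word
`w`. Expanding the determinant row by row, each term depends only on the `m` draws `w ∘ t` picked
out by a map `t : Fin m → Fin k`; it vanishes unless `t` is injective, and for injective `t` these
draws are independent with the law of `x / k`. Hence the expected determinant is
`k (k - 1) ⋯ (k - m + 1) / k ^ m ≥ m! / m ^ m ≥ e ^ (-m)` times the fractional one, and some
outcome of the rounding does at least as well as the expectation.
-/

open Matrix Finset Function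
open scoped Nat

theorem Matrix.det_sum_vecMulVec {ι β R : Type*} [Fintype ι] [DecidableEq ι] [Fintype β]
    [CommRing R] (u v : β → ι → R) :
    (∑ b, vecMulVec (u b) (v b)).det
      = ∑ f : ι → β, (∏ r, u (f r) r) * (of fun r => v (f r)).det := by
  have hrows : ∑ b, vecMulVec (u b) (v b) = of fun r => ∑ b, u b r • v b := by
    ext r c
    simp [vecMulVec_apply, Matrix.sum_apply]
  rw [hrows]
  refine ((detRowAlternating : (ι → R) [⋀^ι]→ₗ[R] R).toMultilinearMap.map_sum _).trans ?_
  exact sum_congr rfl fun f _ => det_mul_column (fun r => u (f r) r) (of fun r => v (f r))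

theorem Fintype.sum_prod_mul_comp_of_injective {ι κ α R : Type*} [Fintype ι] [DecidableEq ι]
    [Fintype κ] [DecidableEq κ] [Fintype α] [CommSemiring R] (x : α → R) (F : (ι → α) → R)
    {t : ι → κ} (ht : Injective t) :
    ∑ w : κ → α, (∏ j, x (w j)) * F (w ∘ t)
      = (∑ i, x i) ^ (Fintype.card κ - Fintype.card ι) * ∑ f : ι → α, (∏ r, x (f r)) * F f := by
  classical
  let p : κ → Prop := (· ∈ Set.range t)
  let σ : ι ≃ Set.range t := Equiv.ofInjective t ht
  -- `w` splits into `w ∘ t` and its values off the range of `t`, which sum out freely.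
  let e : (κ → α) ≃ (ι → α) × ({j // ¬ p j} → α) :=
    (Equiv.piEquivPiSubtypeProd p fun _ => α).trans
      ((σ.arrowCongr (Equiv.refl α)).symm.prodCongr (Equiv.refl _))
  have hsplit : ∀ w : κ → α, (∏ j, x (w j)) * F (w ∘ t)
      = ((∏ r, x ((e w).1 r)) * F (e w).1) * ∏ j, x ((e w).2 j) := by
    intro w
    have hfirst : (e w).1 = fun r => w (t r) := rfl
    have hsecond : (e w).2 = fun j => w j.1 := rfl
    rw [hfirst, hsecond, ← Fintype.prod_subtype_mul_prod_subtype p, mul_right_comm]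
    congr 2
    convert (Fintype.prod_equiv σ (fun r => x (w (t r))) (fun j => x (w j)) fun r => rfl).symm
  have hcard : Fintype.card {j // ¬ p j} = Fintype.card κ - Fintype.card ι := by
    rw [Fintype.card_subtype_compl, Set.card_range_of_injective ht]
  rw [Fintype.sum_congr _ _ hsplit,
    e.sum_comp (fun q => ((∏ r, x (q.1 r)) * F q.1) * ∏ j, x (q.2 j)), Fintype.sum_prod_type]
  dsimp only
  rw [← Fintype.sum_mul_sum, ← Fintype.prod_sum, prod_const, card_univ, hcard, mul_comm]

theorem Matrix.sum_prod_mul_det_sum_vecMulVec {ι κ β R : Type*} [Fintype ι] [DecidableEq ι]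
    [Fintype κ] [DecidableEq κ] [Fintype β] [CommRing R] (a : β → ι → R) (x : β → R) :
    ∑ w : κ → β, (∏ j, x (w j)) * (∑ j, vecMulVec (a (w j)) (a (w j))).det
      = (Fintype.card κ).descFactorial (Fintype.card ι)
          * (∑ i, x i) ^ (Fintype.card κ - Fintype.card ι)
          * (∑ i, x i • vecMulVec (a i) (a i)).det := by
  classical
  let Φ : (ι → β) → R := fun f => (∏ r, a (f r) r) * (of fun r => a (f r)).det
  have hΦ : ∀ f, ¬ Injective f → Φ f = 0 := fun f hf => by
    obtain ⟨r, r', hrr', hne⟩ := not_injective_iff.1 hf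
    have hrows : (of fun r => a (f r)) r = (of fun r => a (f r)) r' := congrArg a hrr'
    simp only [Φ, det_zero_of_row_eq hne hrows, mul_zero]
  have hX : (∑ i, x i • vecMulVec (a i) (a i)).det = ∑ f, (∏ r, x (f r)) * Φ f := by
    simp_rw [← smul_vecMulVec, det_sum_vecMulVec, Pi.smul_apply, smul_eq_mul, prod_mul_distrib,
      mul_assoc, Φ]
  have hinj : ∀ t : ι → κ, ∑ w : κ → β, (∏ j, x (w j)) * Φ (w ∘ t)
      = if Injective t then (∑ i, x i) ^ (Fintype.card κ - Fintype.card ι)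
          * (∑ i, x i • vecMulVec (a i) (a i)).det else 0 := by
    intro t
    split_ifs with ht
    · rw [Fintype.sum_prod_mul_comp_of_injective x Φ ht, hX]
    · exact sum_eq_zero fun w _ => by rw [hΦ _ fun h => ht h.of_comp, mul_zero]
  calc ∑ w : κ → β, (∏ j, x (w j)) * (∑ j, vecMulVec (a (w j)) (a (w j))).det
      = ∑ t : ι → κ, ∑ w : κ → β, (∏ j, x (w j)) * Φ (w ∘ t) := by
        simp_rw [det_sum_vecMulVec, mul_sum]
        exact sum_comm
    _ = _ := by
        rw [Fintype.sum_congr _ _ hinj, sum_ite, sum_const_zero, add_zero, sum_const, nsmul_eq_mul,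
          ← Fintype.card_subtype, Fintype.card_congr (Equiv.subtypeInjectiveEquivEmbedding ι κ),
          Fintype.card_embedding_eq, mul_assoc]

theorem Nat.factorial_mul_pow_le_pow_mul_descFactorial {m k : ℕ} (h : m ≤ k) :
    m ! * k ^ m ≤ m ^ m * k.descFactorial m := by
  have hpow : ∀ n : ℕ, n ^ m = ∏ _i ∈ range m, n := by simp
  rw [← descFactorial_self, descFactorial_eq_prod_range, descFactorial_eq_prod_range, hpow,
    hpow, ← prod_mul_distrib, ← prod_mul_distrib]
  refine prod_le_prod' fun i hi => ?_
  obtain ⟨e, rfl⟩ := Nat.exists_eq_add_of_lt (mem_range.1 hi)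
  obtain ⟨d, rfl⟩ := Nat.exists_eq_add_of_le h
  rw [show i + e + 1 + d - i = e + 1 + d by omega, show i + e + 1 - i = e + 1 by omega]
  nlinarith

theorem Real.exp_neg_mul_pow_le_descFactorial {m k : ℕ} (h : m ≤ k) :
    Real.exp (-m) * k ^ m ≤ k.descFactorial m := by
  have hfact : (m : ℝ) ^ m ≤ Real.exp m * m ! := by
    have := Real.pow_div_factorial_le_exp _ (Nat.cast_nonneg m) m
    rwa [div_le_iff₀ (by positivity)] at this
  have hcomb : (m ! : ℝ) * k ^ m ≤ m ^ m * k.descFactorial m := by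
    exact_mod_cast Nat.factorial_mul_pow_le_pow_mul_descFactorial h
  rw [Real.exp_neg, inv_mul_le_iff₀ (Real.exp_pos _)]
  refine le_of_mul_le_mul_left ?_ (Nat.cast_pos.2 m.factorial_pos)
  calc (m ! : ℝ) * k ^ m ≤ m ^ m * k.descFactorial m := hcomb
    _ ≤ Real.exp m * m ! * k.descFactorial m := by gcongr
    _ = m ! * (Real.exp m * k.descFactorial m) := by ring

theorem Fintype.exists_sum_mul_le_sum_mul {α R : Type*} [Fintype α] [Nonempty α] [Semiring R]
    [LinearOrder R] [IsOrderedRing R] {W g : α → R} (hW : ∀ a, 0 ≤ W a) :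
    ∃ a, ∑ b, W b * g b ≤ (∑ b, W b) * g a := by
  obtain ⟨a, -, ha⟩ := exists_max_image univ g univ_nonempty
  refine ⟨a, ?_⟩
  rw [sum_mul]
  exact sum_le_sum fun b _ => mul_le_mul_of_nonneg_left (ha b (mem_univ b)) (hW b)

theorem Fintype.sum_card_fiber_smul {κ β R M : Type*} [Fintype κ] [Fintype β] [DecidableEq β]
    [Semiring R] [AddCommMonoid M] [Module R M] (w : κ → β) (A : β → M) :
    ∑ i, (#{j | w j = i} : R) • A i = ∑ j, A (w j) := by
  simp_rw [Nat.cast_smul_eq_nsmul, ← sum_const]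
  exact Finset.sum_fiberwise' univ w A

theorem stmt12_general (m k n : ℕ) (hmk : m ≤ k)
    (a : Fin n → Fin m → ℝ) (x : Fin n → ℝ)
    (hx : ∀ i, 0 ≤ x i) (hxs : ∑ i, x i = (k : ℝ)) :
    ∃ c : Fin n → ℕ, ∑ i, c i = k ∧
      (∑ i, (c i : ℝ) • vecMulVec (a i) (a i)).det
        ≥ Real.exp (-(m : ℝ)) * (∑ i, x i • vecMulVec (a i) (a i)).det := by
  set X := (∑ i, x i • vecMulVec (a i) (a i)).det
  have hX : 0 ≤ X := (posSemidef_sum univ fun i _ =>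
    (posSemidef_vecMulVec_star_self (a i)).smul (hx i)).det_nonneg
  have hweights : ∑ w : Fin k → Fin n, ∏ j, x (w j) = (k : ℝ) ^ k := by
    rw [← Fintype.sum_pow, hxs]
  have hpos : (0 : ℝ) < (k : ℝ) ^ k := by exact_mod_cast Nat.pow_self_pos
  have : Nonempty (Fin k → Fin n) :=
    univ_nonempty_iff.1 (nonempty_of_sum_ne_zero (hweights ▸ hpos.ne'))
  obtain ⟨w, hw⟩ := Fintype.exists_sum_mul_le_sum_mul
    (g := fun w : Fin k → Fin n => (∑ j, vecMulVec (a (w j)) (a (w j))).det)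
    fun w => prod_nonneg fun j _ => hx (w j)
  rw [sum_prod_mul_det_sum_vecMulVec, hweights, hxs, Fintype.card_fin, Fintype.card_fin] at hw
  refine ⟨fun i => #{j | w j = i}, ?_, ?_⟩
  · rw [← card_eq_sum_card_fiberwise fun j _ => mem_univ (w j), card_univ, Fintype.card_fin]
  · rw [Fintype.sum_card_fiber_smul, ge_iff_le]
    refine le_of_mul_le_mul_left ?_ hpos
    calc (k : ℝ) ^ k * (Real.exp (-m) * X) = Real.exp (-m) * k ^ m * (k ^ (k - m) * X) := by
          rw [← Nat.add_sub_cancel' hmk, pow_add, Nat.add_sub_cancel_left]; ring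
      _ ≤ k.descFactorial m * (k ^ (k - m) * X) := by
          gcongr; exact Real.exp_neg_mul_pow_le_descFactorial hmk
      _ ≤ _ := by linarith

/-- The D-optimal design problem with repetitions admits a `1/e`-approximation:
for every fractional solution there is an integral count vector `c` with `∑ c_i = k`
whose determinant is at least `e^{-m}` times the fractional determinant. -/
theorem stmt12 (m k n : ℕ) (hm : 1 ≤ m) (hmk : m ≤ k)
    (a : Fin n → Fin m → ℝ) (x : Fin n → ℝ)
    (hx : ∀ i, 0 ≤ x i) (hxs : ∑ i, x i = (k : ℝ)) :
    ∃ c : Fin n → ℕ, ∑ i, c i = k ∧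
      (∑ i, (c i : ℝ) • vecMulVec (a i) (a i)).det
        ≥ Real.exp (-(m : ℝ)) * (∑ i, x i • vecMulVec (a i) (a i)).det :=
  stmt12_general m k n hmk a x hx hxs
end

section
/- Let ε ∈ (0,1), let m ≤ k be positive integers with k ≥ (m−1)/ε, and let a_1,…,a_n ∈ ℝ^m. For every x ∈ ℝ_{≥0}^n with Σ_{i∈[n]} x_i = k there exists a count vector c : [n] → ℕ with Σ_{i∈[n]} c_i = k such that det(Σ_{i∈[n]} c_i a_i a_iᵀ) ≥ (1−ε)^m · det(Σ_{i∈[n]} x_i a_i a_iᵀ); hence the D-optimal design problem with repetitions admits a (1−ε)-approximation. -/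
open Matrix Finset


lemma det_expand {m : ℕ} {ι : Type*} [Fintype ι] [DecidableEq ι]
    (b : ι → Fin m → ℝ) (y : ι → ℝ) :
    (∑ i, y i • vecMulVec (b i) (b i)).det
      = ∑ g : Fin m → ι, (∏ j, y (g j) * b (g j) j) * (Matrix.of fun j => b (g j)).det := by
  have h1 : (∑ i, y i • vecMulVec (b i) (b i))
      = Matrix.of (fun j : Fin m => ∑ i, (y i * b i j) • b i) := by
    ext j l
    simp [vecMulVec_apply, Matrix.sum_apply, smul_eq_mul, mul_assoc]
  rw [h1]
  show (Matrix.detRowAlternating : (Fin m → ℝ) [⋀^Fin m]→ₗ[ℝ] ℝ).toMultilinearMap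
      (fun j => ∑ i, (y i * b i j) • b i) = _
  rw [(Matrix.detRowAlternating : (Fin m → ℝ) [⋀^Fin m]→ₗ[ℝ] ℝ).toMultilinearMap.map_sum
    (fun j i => (y i * b i j) • b i)]
  refine Finset.sum_congr rfl fun g _ => ?_
  rw [(Matrix.detRowAlternating : (Fin m → ℝ) [⋀^Fin m]→ₗ[ℝ] ℝ).toMultilinearMap.map_smul_univ
    (fun j => y (g j) * b (g j) j) (fun j => b (g j))]
  rfl

lemma sum_comp_emb {α β γ : Type*} [Fintype α] [Fintype β] [Fintype γ]
    [DecidableEq α] [DecidableEq β]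
    (h : α ↪ β) (Φ : (α → γ) → ℝ) (ψ : γ → ℝ) :
    ∑ f : β → γ, (∏ t, ψ (f t)) * Φ (f ∘ h)
      = (∑ i, ψ i) ^ (Fintype.card β - Fintype.card α) *
        ∑ g : α → γ, (∏ j, ψ (g j)) * Φ g := by
  classical
  set p : β → Prop := fun t => t ∈ Set.range ⇑h with hp
  let e0 : {t // p t} ⊕ {t // ¬ p t} ≃ β := Equiv.sumCompl p
  let e2 : α ≃ {t // p t} := Equiv.ofInjective ⇑h h.injective
  let E : (β → γ) ≃ (α → γ) × ({t // ¬ p t} → γ) :=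
    (Equiv.arrowCongr e0.symm (Equiv.refl γ)).trans
      ((Equiv.sumArrowEquivProdArrow _ _ γ).trans
        (Equiv.prodCongr (Equiv.arrowCongr e2.symm (Equiv.refl γ)) (Equiv.refl _)))
  have hE1 : ∀ f : β → γ, (E f).1 = f ∘ ⇑h := fun f => rfl
  have hE2 : ∀ f : β → γ, (E f).2 = fun t => f t.1 := fun f => rfl
  have key : ∀ f : β → γ, (∏ t, ψ (f t)) * Φ (f ∘ ⇑h)
      = ((∏ j, ψ ((E f).1 j)) * Φ ((E f).1)) * ∏ t, ψ ((E f).2 t) := by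
    intro f
    rw [hE1, hE2]
    have hprod : (∏ t, ψ (f t))
        = (∏ j : α, ψ (f (h j))) * ∏ t : {t // ¬ p t}, ψ (f t.1) := by
      rw [← Fintype.prod_equiv e0 (fun s => ψ (f (e0 s))) (fun t => ψ (f t)) (fun s => rfl),
        Fintype.prod_sum_type]
      congr 1
      exact (Fintype.prod_equiv e2 (fun j => ψ (f (h j))) (fun s => ψ (f s.1))
        (fun j => rfl)).symm
    rw [hprod]
    simp only [Function.comp_apply]
    ring
  calc ∑ f : β → γ, (∏ t, ψ (f t)) * Φ (f ∘ ⇑h)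
      = ∑ q : (α → γ) × ({t // ¬ p t} → γ),
          ((∏ j, ψ (q.1 j)) * Φ q.1) * ∏ t, ψ (q.2 t) :=
        Fintype.sum_equiv E _ _ key
    _ = (∑ g : α → γ, (∏ j, ψ (g j)) * Φ g) *
          ∑ f2 : {t // ¬ p t} → γ, ∏ t, ψ (f2 t) := by
        rw [Fintype.sum_prod_type]
        simp_rw [← Finset.mul_sum]
        rw [← Finset.sum_mul]
    _ = (∑ i, ψ i) ^ (Fintype.card β - Fintype.card α) *
        ∑ g : α → γ, (∏ j, ψ (g j)) * Φ g := by
        rw [mul_comm]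
        congr 1
        have h1 : ∑ f2 : {t // ¬ p t} → γ, ∏ t, ψ (f2 t)
            = ∏ _t : {t // ¬ p t}, ∑ i, ψ i := by
          rw [Finset.prod_univ_sum, Fintype.piFinset_univ]
        have hcard : Fintype.card {t // p t} = Fintype.card α := (Fintype.card_congr e2).symm
        rw [h1, Finset.prod_const, Finset.card_univ, Fintype.card_subtype_compl, hcard]

lemma main_identity {m k n : ℕ} (a : Fin n → Fin m → ℝ) (x : Fin n → ℝ) :
    ∑ f : Fin k → Fin n, (∏ t, x (f t)) * (∑ t, vecMulVec (a (f t)) (a (f t))).det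
      = (∑ i, x i) ^ (k - m) * ((Nat.descFactorial k m : ℝ) *
        (∑ i, x i • vecMulVec (a i) (a i)).det) := by
  classical
  have expand_f : ∀ f : Fin k → Fin n, (∑ t, vecMulVec (a (f t)) (a (f t))).det
      = ∑ h : Fin m → Fin k, (∏ j, a (f (h j)) j) *
          (Matrix.of fun j => a (f (h j))).det := by
    intro f
    have h0 := det_expand (fun t => a (f t)) (fun _ => (1:ℝ))
    simpa using h0
  simp_rw [expand_f, Finset.mul_sum]
  rw [Finset.sum_comm]
  have hzero : ∀ h : Fin m → Fin k, h ∈ (univ : Finset (Fin m → Fin k)) →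
      (∑ f : Fin k → Fin n, (∏ t, x (f t)) *
        ((∏ j, a (f (h j)) j) * (Matrix.of fun j => a (f (h j))).det)) ≠ 0 →
      Function.Injective h := by
    intro h _ hne
    by_contra hinj
    apply hne
    refine Finset.sum_eq_zero fun f _ => ?_
    obtain ⟨j1, j2, he, hj⟩ := Function.not_injective_iff.mp hinj
    have : (Matrix.of fun j => a (f (h j))).det = 0 :=
      Matrix.det_zero_of_row_eq hj (congrArg (fun t => a (f t)) he)
    rw [this]; ring
  rw [← Finset.sum_filter_of_ne hzero]
  have hstep : ∑ h ∈ univ.filter (fun h : Fin m → Fin k => Function.Injective h),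
      (∑ f : Fin k → Fin n, (∏ t, x (f t)) *
        ((∏ j, a (f (h j)) j) * (Matrix.of fun j => a (f (h j))).det))
      = ∑ h : Fin m ↪ Fin k, (∑ f : Fin k → Fin n, (∏ t, x (f t)) *
        ((∏ j, a (f (h j)) j) * (Matrix.of fun j => a (f (h j))).det)) := by
    refine Finset.sum_bij
      (fun h hh => (⟨h, (Finset.mem_filter.mp hh).2⟩ : Fin m ↪ Fin k))
      (fun _ _ => Finset.mem_univ _) ?_ ?_ (fun h hh => rfl)
    · intro h1 hh1 h2 hh2 heq
      exact congrArg (fun e : Fin m ↪ Fin k => ⇑e) heq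
    · intro e _
      refine ⟨⇑e, Finset.mem_filter.mpr ⟨Finset.mem_univ _, e.injective⟩, ?_⟩
      ext j; rfl
  rw [hstep]
  have hper : ∀ h : Fin m ↪ Fin k,
      (∑ f : Fin k → Fin n, (∏ t, x (f t)) *
        ((∏ j, a (f (h j)) j) * (Matrix.of fun j => a (f (h j))).det))
      = (∑ i, x i) ^ (k - m) *
        ∑ g : Fin m → Fin n, (∏ j, x (g j)) *
          ((∏ j, a (g j) j) * (Matrix.of fun j => a (g j)).det) := by
    intro h
    have := sum_comp_emb h
      (fun g => (∏ j, a (g j) j) * (Matrix.of fun j => a (g j)).det) x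
    simpa [Fintype.card_fin] using this
  simp_rw [hper]
  rw [Finset.sum_const, Finset.card_univ, Fintype.card_embedding_eq, Fintype.card_fin,
    Fintype.card_fin, nsmul_eq_mul]
  rw [det_expand a x]
  have : ∑ g : Fin m → Fin n, (∏ j, x (g j) * a (g j) j) * (Matrix.of fun j => a (g j)).det
      = ∑ g : Fin m → Fin n, (∏ j, x (g j)) *
          ((∏ j, a (g j) j) * (Matrix.of fun j => a (g j)).det) := by
    refine Finset.sum_congr rfl fun g _ => ?_
    rw [Finset.prod_mul_distrib]; ring
  rw [this]; ring

lemma psd_sum {m n : ℕ} (a : Fin n → Fin m → ℝ) (y : Fin n → ℝ) (hy : ∀ i, 0 ≤ y i) :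
    (∑ i, y i • vecMulVec (a i) (a i)).PosSemidef := by
  have hEq : (∑ i, y i • vecMulVec (a i) (a i))
      = (Matrix.of fun i j => Real.sqrt (y i) * a i j)ᴴ *
        (Matrix.of fun i j => Real.sqrt (y i) * a i j) := by
    ext j l
    simp only [Matrix.mul_apply, Matrix.conjTranspose_apply, Matrix.of_apply,
      Matrix.sum_apply, Matrix.smul_apply, vecMulVec_apply, smul_eq_mul, star_trivial]
    refine Finset.sum_congr rfl fun i _ => ?_
    rw [mul_mul_mul_comm, Real.mul_self_sqrt (hy i)]
  rw [hEq]
  exact Matrix.posSemidef_conjTranspose_mul_self _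

lemma det_nn {m : ℕ} {M : Matrix (Fin m) (Fin m) ℝ} (hM : M.PosSemidef) : 0 ≤ M.det := by
  rw [hM.isHermitian.det_eq_prod_eigenvalues]
  norm_num
  exact Finset.prod_nonneg fun i _ => hM.eigenvalues_nonneg i

lemma ratio_bound (ε : ℝ) (hε : ε ∈ Set.Ioo (0 : ℝ) 1) (m k : ℕ) (hm : 1 ≤ m)
    (hmk : m ≤ k) (hk : ((m : ℝ) - 1) / ε ≤ (k : ℝ)) :
    (1 - ε) ^ m ≤ (Nat.descFactorial k m : ℝ) / (k : ℝ) ^ m := by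
  have hk0 : (0:ℝ) < k := by
    have : (1:ℕ) ≤ k := le_trans hm hmk
    exact_mod_cast Nat.lt_of_lt_of_le Nat.zero_lt_one this
  have hdesc : (Nat.descFactorial k m : ℝ) = ∏ j ∈ Finset.range m, ((k : ℝ) - j) := by
    rw [Nat.descFactorial_eq_prod_range, Nat.cast_prod]
    refine Finset.prod_congr rfl fun j hj => ?_
    have hj' : j ≤ k := le_trans (le_of_lt (Finset.mem_range.mp hj)) hmk
    push_cast [Nat.cast_sub hj']; ring
  have hpow : (k : ℝ) ^ m = ∏ _j ∈ Finset.range m, (k : ℝ) := by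
    rw [Finset.prod_const, Finset.card_range]
  rw [hdesc, hpow, ← Finset.prod_div_distrib]
  have h1 : (1 - ε) ^ m = ∏ _j ∈ Finset.range m, (1 - ε) := by
    rw [Finset.prod_const, Finset.card_range]
  rw [h1]
  refine Finset.prod_le_prod (fun j _ => by linarith [hε.2]) (fun j hj => ?_)
  rw [le_div_iff₀ hk0]
  have hj1 : (j : ℝ) ≤ (m : ℝ) - 1 := by
    have := Finset.mem_range.mp hj
    have : (j:ℝ) ≤ (m:ℝ) - 1 := by
      have hjm : j + 1 ≤ m := this
      have h2 : ((j:ℝ) + 1) ≤ (m:ℝ) := by exact_mod_cast hjm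
      linarith
    exact this
  have hεk : (m : ℝ) - 1 ≤ ε * k := by
    rw [div_le_iff₀ hε.1] at hk; linarith
  nlinarith [hε.1]

/-- If `k ≥ (m-1)/ε`, the D-optimal design problem with repetitions admits a
`(1-ε)`-approximation: for every fractional solution there is an integral count vector
`c` with `∑ c_i = k` whose determinant is at least `(1-ε)^m` times the fractional
determinant. -/
theorem stmt13 (ε : ℝ) (hε : ε ∈ Set.Ioo (0 : ℝ) 1) (m k n : ℕ) (hm : 1 ≤ m)
    (hmk : m ≤ k) (hk : ((m : ℝ) - 1) / ε ≤ (k : ℝ))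
    (a : Fin n → Fin m → ℝ) (x : Fin n → ℝ)
    (hx : ∀ i, 0 ≤ x i) (hxs : ∑ i, x i = (k : ℝ)) :
    ∃ c : Fin n → ℕ, ∑ i, c i = k ∧
      (∑ i, (c i : ℝ) • vecMulVec (a i) (a i)).det
        ≥ (1 - ε) ^ m * (∑ i, x i • vecMulVec (a i) (a i)).det := by
  classical
  have hk0 : (0:ℝ) < k := by
    have h1 : (1:ℕ) ≤ k := le_trans hm hmk
    exact_mod_cast Nat.lt_of_lt_of_le Nat.zero_lt_one h1
  set w : (Fin k → Fin n) → ℝ := fun f => ∏ t, x (f t) with hw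
  set Dt : (Fin k → Fin n) → ℝ := fun f => (∑ t, vecMulVec (a (f t)) (a (f t))).det with hDt
  have hid : ∑ f : Fin k → Fin n, w f * Dt f
      = (k:ℝ)^(k-m) * ((Nat.descFactorial k m : ℝ) *
          (∑ i, x i • vecMulVec (a i) (a i)).det) := by
    have h1 := main_identity (k := k) a x
    rw [hxs] at h1; exact h1
  have hws : ∑ f : Fin k → Fin n, w f = (k:ℝ)^k := by
    have h1 : ∑ f : Fin k → Fin n, w f
        = ∑ f ∈ Fintype.piFinset (fun _ : Fin k => (univ : Finset (Fin n))),
            ∏ t, x (f t) := by rw [Fintype.piFinset_univ]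
    rw [h1, ← Finset.prod_univ_sum, hxs, Finset.prod_const, Finset.card_univ,
      Fintype.card_fin]
  set B : ℝ := (Nat.descFactorial k m : ℝ) / (k:ℝ)^m *
      (∑ i, x i • vecMulVec (a i) (a i)).det with hB
  have hsum_eq : ∑ f : Fin k → Fin n, w f * Dt f = ∑ f : Fin k → Fin n, w f * B := by
    have h2 : ∑ f : Fin k → Fin n, w f * B = (k:ℝ)^k * B := by
      rw [← Finset.sum_mul, hws]
    have hkk : (k:ℝ)^k = (k:ℝ)^(k-m) * (k:ℝ)^m := by
      rw [← pow_add, Nat.sub_add_cancel hmk]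
    rw [h2, hid, hB, hkk]
    field_simp
  have hwnn : ∀ f : Fin k → Fin n, 0 ≤ w f := fun f => Finset.prod_nonneg fun t _ => hx _
  have hex : ∃ f : Fin k → Fin n, B ≤ Dt f := by
    by_contra hcon
    push_neg at hcon
    have hpos : (0:ℝ) < ∑ f : Fin k → Fin n, w f := by rw [hws]; positivity
    obtain ⟨f0, -, hf0⟩ := Finset.exists_lt_of_sum_lt (f := fun _ => (0:ℝ)) (g := w)
      (by simpa using hpos)
    have hlt : ∑ f : Fin k → Fin n, w f * Dt f < ∑ f : Fin k → Fin n, w f * B :=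
      Finset.sum_lt_sum (fun f _ => mul_le_mul_of_nonneg_left (hcon f).le (hwnn f))
        ⟨f0, Finset.mem_univ _, mul_lt_mul_of_pos_left (hcon f0) hf0⟩
    rw [hsum_eq] at hlt; exact lt_irrefl _ hlt
  obtain ⟨f, hf⟩ := hex
  refine ⟨fun i => (univ.filter fun t => f t = i).card, ?_, ?_⟩
  · have h1 := Finset.card_eq_sum_card_fiberwise
      (f := f) (s := (univ : Finset (Fin k))) (t := (univ : Finset (Fin n)))
      (fun t _ => Finset.mem_univ _)
    calc ∑ i, (univ.filter fun t => f t = i).card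
        = (univ : Finset (Fin k)).card := h1.symm
      _ = k := by simp
  · have hM : (∑ i, (((univ.filter fun t => f t = i).card : ℕ) : ℝ) •
        vecMulVec (a i) (a i)) = ∑ t, vecMulVec (a (f t)) (a (f t)) := by
      have h1 : ∀ i : Fin n, (((univ.filter fun t => f t = i).card : ℕ) : ℝ) •
          vecMulVec (a i) (a i)
          = ∑ t ∈ univ.filter (fun t => f t = i), vecMulVec (a (f t)) (a (f t)) := by
        intro i
        calc (((univ.filter fun t => f t = i).card : ℕ) : ℝ) • vecMulVec (a i) (a i)
            = ((univ.filter fun t => f t = i).card : ℕ) • vecMulVec (a i) (a i) :=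
              Nat.cast_smul_eq_nsmul _ _ _
          _ = ∑ _t ∈ univ.filter (fun t => f t = i), vecMulVec (a i) (a i) :=
              (Finset.sum_const _).symm
          _ = ∑ t ∈ univ.filter (fun t => f t = i), vecMulVec (a (f t)) (a (f t)) :=
              Finset.sum_congr rfl fun t ht => by rw [(Finset.mem_filter.mp ht).2]
      rw [Finset.sum_congr rfl fun i _ => h1 i]
      exact Finset.sum_fiberwise_of_maps_to (fun t _ => Finset.mem_univ _) _
    rw [ge_iff_le, hM]
    have hdet0 : 0 ≤ (∑ i, x i • vecMulVec (a i) (a i)).det := det_nn (psd_sum a x hx)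
    have h2 : (1-ε)^m * (∑ i, x i • vecMulVec (a i) (a i)).det ≤ B :=
      mul_le_mul_of_nonneg_right (ratio_bound ε hε m k hm hmk hk) hdet0
    exact le_trans h2 hf
end

section
/- Let m, k, n, τ be integers with 0 ≤ τ ≤ m ≤ k ≤ n. Then C(n−m, k−τ) · (n+1−m)^{m−τ} · C(n+1−m, k−m) ≤ C(n+1−m, k−τ) · (n−m)^{m−τ} · C(n−m, k−m). Consequently, g(m,n,k) ≤ g(m,n+1,k), i.e., g(m,n,k) is monotone non-decreasing in n for fixed m ≤ k. -/
/-!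
For `a = n - m` and `s = k - m`, the first claim compares
`C(a, s + j) / (a ^ j C(a, s)) = ∏_{i < j} (a - s - i) / (a (s + 1 + i))` with the same
expression at `a + 1`; each factor `(1 - (s + i) / a) / (s + 1 + i)` grows with `a`.
Hence every coefficient of the polynomial defining `g(m, n, k)` grows with `n`, while the
interval `[mk/n, m]` over which it is maximised only widens.
-/

open Finset

namespace Nat

theorem choose_succ_mul_succ_mul_choose_le (a t : ℕ) :
    a.choose (t + 1) * (a + 1) * (a + 1).choose t ≤ (a + 1).choose (t + 1) * a * a.choose t := by
  refine Nat.le_of_mul_le_mul_right ?_ t.succ_pos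
  have hfactor : (a - t) * (a + 1) ≤ (a + 1 - t) * a := by
    rcases le_or_gt t a with h | h
    · obtain ⟨d, rfl⟩ := Nat.exists_eq_add_of_le h
      rw [show t + d + 1 - t = d + 1 by omega, Nat.add_sub_cancel_left]
      nlinarith
    · simp [Nat.sub_eq_zero_of_le h.le]
  calc a.choose (t + 1) * (a + 1) * (a + 1).choose t * (t + 1)
      = (a.choose (t + 1) * (t + 1)) * (a + 1) * (a + 1).choose t := by ring
    _ = a.choose t * (a + 1).choose t * ((a - t) * (a + 1)) := by
      rw [choose_succ_right_eq]; ring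
    _ ≤ a.choose t * (a + 1).choose t * ((a + 1 - t) * a) := Nat.mul_le_mul_left _ hfactor
    _ = ((a + 1).choose (t + 1) * (t + 1)) * a * a.choose t := by
      rw [choose_succ_right_eq]; ring
    _ = (a + 1).choose (t + 1) * a * a.choose t * (t + 1) := by ring

theorem choose_add_mul_succ_pow_mul_choose_le (a s j : ℕ) :
    a.choose (s + j) * (a + 1) ^ j * (a + 1).choose s ≤
      (a + 1).choose (s + j) * a ^ j * a.choose s := by
  induction j with
  | zero => rw [Nat.mul_comm]; simp
  | succ j ih =>
    rcases le_or_gt (s + j) a with hle | hlt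
    · have hpos : 0 < a.choose (s + j) := Nat.choose_pos hle
      have hpos' : 0 < (a + 1).choose (s + j) := Nat.choose_pos (by omega)
      refine Nat.le_of_mul_le_mul_right ?_ (Nat.mul_pos hpos hpos')
      calc a.choose (s + (j + 1)) * (a + 1) ^ (j + 1) * (a + 1).choose s
            * (a.choose (s + j) * (a + 1).choose (s + j))
          = (a.choose (s + j + 1) * (a + 1) * (a + 1).choose (s + j))
            * (a.choose (s + j) * (a + 1) ^ j * (a + 1).choose s) := by ring_nf
        _ ≤ ((a + 1).choose (s + j + 1) * a * a.choose (s + j))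
            * ((a + 1).choose (s + j) * a ^ j * a.choose s) :=
          Nat.mul_le_mul (choose_succ_mul_succ_mul_choose_le a (s + j)) ih
        _ = (a + 1).choose (s + (j + 1)) * a ^ (j + 1) * a.choose s
            * (a.choose (s + j) * (a + 1).choose (s + j)) := by ring_nf
    · simp [Nat.choose_eq_zero_of_lt (show a < s + (j + 1) by omega)]

theorem cast_choose_add_div_pow_mul_choose_le (a s j : ℕ) (hs : s ≤ a + 1) :
    (a.choose (s + j) : ℝ) / ((a : ℝ) ^ j * a.choose s)
      ≤ ((a + 1).choose (s + j) : ℝ) / (((a : ℝ) + 1) ^ j * (a + 1).choose s) := by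
  have hden : 0 < ((a : ℝ) + 1) ^ j * (a + 1).choose s := by
    have := Nat.choose_pos hs
    positivity
  rcases (show 0 ≤ (a : ℝ) ^ j * a.choose s by positivity).eq_or_lt with hzero | hpos
  · rw [← hzero, div_zero]
    positivity
  · rw [div_le_div_iff₀ hpos hden, ← mul_assoc, ← mul_assoc]
    exact_mod_cast choose_add_mul_succ_pow_mul_choose_le a s j

end Nat

theorem csSup_image_le_csSup_image {α β : Type*} [ConditionallyCompleteLattice β]
    {f g : α → β} {s t : Set α} (hs : s.Nonempty) (hst : s ⊆ t) (hfg : ∀ x ∈ s, f x ≤ g x)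
    (hg : BddAbove (g '' t)) : sSup (f '' s) ≤ sSup (g '' t) :=
  csSup_le (hs.image f) <| by
    rintro _ ⟨x, hx, rfl⟩
    exact (hfg x hx).trans (le_csSup hg ⟨x, hst hx, rfl⟩)

noncomputable def gCoeff (m n k τ : ℕ) : ℝ :=
  ((n - m).choose (k - τ) : ℝ) / (((n - m : ℕ) : ℝ) ^ (m - τ) * ((n - m).choose (k - m) : ℝ))

noncomputable def gPoly (m n k : ℕ) (y : ℝ) : ℝ :=
  ∑ τ ∈ range (m + 1),
    gCoeff m n k τ * ((m.choose τ : ℝ) / (m : ℝ) ^ τ) * ((k : ℝ) - y) ^ (m - τ) * y ^ τ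

theorem gval_eq_sSup_image_gPoly (m n k : ℕ) :
    gval m n k = sSup (gPoly m n k '' Set.Icc ((m * k : ℝ) / n) m) :=
  rfl

theorem continuous_gPoly (m n k : ℕ) : Continuous (gPoly m n k) := by
  unfold gPoly
  fun_prop

section Monotone

variable {m k n : ℕ}

theorem gCoeff_le_succ {τ : ℕ} (hτ : τ ≤ m) (hmk : m ≤ k) (hkn : k ≤ n) :
    gCoeff m n k τ ≤ gCoeff m (n + 1) k τ := by
  unfold gCoeff
  rw [show n + 1 - m = n - m + 1 by omega, show k - τ = k - m + (m - τ) by omega, Nat.cast_succ]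
  exact Nat.cast_choose_add_div_pow_mul_choose_le _ _ _ (by omega)

theorem gPoly_le_succ (hmk : m ≤ k) (hkn : k ≤ n) {y : ℝ} (hy₀ : 0 ≤ y) (hyk : y ≤ k) :
    gPoly m n k y ≤ gPoly m (n + 1) k y := by
  have hky : 0 ≤ (k : ℝ) - y := sub_nonneg.2 hyk
  refine sum_le_sum fun τ hτ => ?_
  gcongr
  exact gCoeff_le_succ (Nat.lt_succ_iff.1 (mem_range.1 hτ)) hmk hkn

theorem Icc_mul_div_nonempty (hkn : k ≤ n) :
    (Set.Icc ((m * k : ℝ) / n) m).Nonempty := by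
  refine Set.nonempty_Icc.2 (div_le_of_le_mul₀ (by positivity) (by positivity) ?_)
  exact_mod_cast Nat.mul_le_mul_left m hkn

theorem mul_div_succ_le_mul_div (hkn : k ≤ n) :
    (m * k : ℝ) / ((n + 1 : ℕ) : ℝ) ≤ (m * k : ℝ) / n := by
  rcases Nat.eq_zero_or_pos n with rfl | hn
  · obtain rfl : k = 0 := by omega
    simp
  · exact div_le_div_of_nonneg_left (by positivity) (by exact_mod_cast hn) (by push_cast; linarith)

end Monotone

/-- Cross-multiplied monotonicity inequality for the coefficients of the bounding
function, and the consequent monotonicity of `g(m,n,k)` in `n`. -/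
theorem stmt16 (m k n τ : ℕ) (hτ : τ ≤ m) (hmk : m ≤ k) (hkn : k ≤ n) :
    ((n - m).choose (k - τ) * (n + 1 - m) ^ (m - τ) * (n + 1 - m).choose (k - m)
      ≤ (n + 1 - m).choose (k - τ) * (n - m) ^ (m - τ) * (n - m).choose (k - m))
    ∧ gval m n k ≤ gval m (n + 1) k := by
  refine ⟨?_, ?_⟩
  · rw [show n + 1 - m = n - m + 1 by omega, show k - τ = k - m + (m - τ) by omega]
    exact Nat.choose_add_mul_succ_pow_mul_choose_le _ _ _
  · rw [gval_eq_sSup_image_gPoly, gval_eq_sSup_image_gPoly]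
    refine csSup_image_le_csSup_image (Icc_mul_div_nonempty hkn)
      (Set.Icc_subset_Icc_left (mul_div_succ_le_mul_div hkn)) (fun y hy => ?_)
      (isCompact_Icc.image (continuous_gPoly m (n + 1) k)).bddAbove
    have hy₀ : 0 ≤ y := le_trans (by positivity) hy.1
    exact gPoly_le_succ hmk hkn hy₀ (hy.2.trans (by exact_mod_cast hmk))
end

section
/- Let m, k, n, τ be integers with 0 ≤ τ ≤ m ≤ k ≤ n and m < n, let T ⊆ [n] with |T| = m, and let x ∈ ℝ_{≥0}^n. Then (n−m)^{m−τ} · C(n−m, k−m) · Σ_{Q ⊆ [n]∖T, |Q| = k−τ} ∏_{i∈Q} x_i ≤ C(n−m, k−τ) · (Σ_{R ⊆ [n]∖T, |R| = k−m} ∏_{j∈R} x_j) · (Σ_{i∈[n]∖T} x_i)^{m−τ}. -/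
/-!
Write `e_j` for the `j`-th elementary symmetric sum of the nonnegative numbers `x_i`, `i ∈ s`,
`p = e_1` and `N = #s`. Double counting pairs `(A, i)` with `#A = j` and `i ∉ A` gives
`(j + 1) e_{j+1} = L_j` and `e_j p = L_j + M_j`, where `L_j` (resp. `M_j`) sums `x_i ∏_A x` over
`i ∉ A` (resp. `i ∈ A`). Counting once more, `j L_j` and `M_j` become sums over `#C = j - 1` of
`∏_C x` times `∑_{i ≠ i'} x_i x_i'` resp. `∑ x_i²` over `s \ C`, so Cauchy–Schwarz gives
`j L_j ≤ (N - j) M_j`, whence `N (j + 1) e_{j+1} ≤ (N - j) e_j p`. In normalised form this is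
`e_{j+1} / C(N, j+1) ≤ (e_j / C(N, j)) (p / N)`, and iterating it `m - τ` times from `j = k - m`
over `s = [n] \ T` gives the theorem.
-/

open Finset

namespace Finset

variable {ι : Type*} [DecidableEq ι]

theorem sum_powersetCard_succ_sum_erase {M : Type*} [AddCommMonoid M] (s : Finset ι) (j : ℕ)
    (F : Finset ι → ι → M) :
    ∑ A ∈ s.powersetCard (j + 1), ∑ i ∈ A, F (A.erase i) i
      = ∑ C ∈ s.powersetCard j, ∑ i ∈ s \ C, F C i := by
  rw [sum_sigma', sum_sigma']
  refine sum_bij' (fun p _ => ⟨p.1.erase p.2, p.2⟩) (fun p _ => ⟨insert p.2 p.1, p.2⟩)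
    ?_ ?_ ?_ ?_ fun _ _ => rfl
  · rintro ⟨A, i⟩ hp
    simp only [mem_sigma, mem_powersetCard] at hp ⊢
    obtain ⟨⟨hAs, hAcard⟩, hi⟩ := hp
    refine ⟨⟨(erase_subset _ _).trans hAs, by rw [card_erase_of_mem hi, hAcard]; rfl⟩, ?_⟩
    exact mem_sdiff.2 ⟨hAs hi, notMem_erase _ _⟩
  · rintro ⟨C, i⟩ hp
    simp only [mem_sigma, mem_powersetCard, mem_sdiff] at hp ⊢
    obtain ⟨⟨hCs, hCcard⟩, his, hiC⟩ := hp
    exact ⟨⟨insert_subset his hCs, by rw [card_insert_of_notMem hiC, hCcard]⟩,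
      mem_insert_self _ _⟩
  · rintro ⟨A, i⟩ hp
    simp only [mem_sigma] at hp
    simp [insert_erase hp.2]
  · rintro ⟨C, i⟩ hp
    simp only [mem_sigma, mem_sdiff] at hp
    simp [erase_insert hp.2.2]

theorem sum_powersetCard_succ_sum_mul_prod {R : Type*} [CommSemiring R] (s : Finset ι)
    (x : ι → R) (j : ℕ) (φ : ι → Finset ι → R) :
    ∑ A ∈ s.powersetCard (j + 1), (∑ i ∈ A, φ i (A.erase i)) * ∏ i ∈ A, x i
      = ∑ C ∈ s.powersetCard j, (∑ i ∈ s \ C, φ i C * x i) * ∏ i ∈ C, x i := by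
  have hsplit : ∀ A : Finset ι, (∑ i ∈ A, φ i (A.erase i)) * ∏ i ∈ A, x i
      = ∑ i ∈ A, φ i (A.erase i) * x i * ∏ a ∈ A.erase i, x a := by
    intro A
    rw [sum_mul]
    refine sum_congr rfl fun i hi => ?_
    rw [mul_assoc, mul_prod_erase A x hi]
  simp only [hsplit, sum_mul]
  exact sum_powersetCard_succ_sum_erase s j fun C i => φ i C * x i * ∏ a ∈ C, x a

theorem succ_mul_sum_powersetCard_succ_prod {R : Type*} [CommSemiring R] (s : Finset ι)
    (x : ι → R) (j : ℕ) :
    ((j : R) + 1) * ∑ B ∈ s.powersetCard (j + 1), ∏ i ∈ B, x i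
      = ∑ A ∈ s.powersetCard j, (∑ i ∈ s \ A, x i) * ∏ i ∈ A, x i := by
  have h := sum_powersetCard_succ_sum_mul_prod s x j fun _ _ => 1
  simp only [sum_const, one_mul] at h
  rw [mul_sum, ← h]
  refine sum_congr rfl fun B hB => ?_
  rw [(mem_powersetCard.1 hB).2]
  ring

end Finset

theorem Nat.cast_choose_succ_mul {R : Type*} [Ring R] (N j : ℕ) :
    (N.choose (j + 1) : R) * (j + 1) = N.choose j * ((N : R) - j) := by
  rcases le_or_gt j N with hj | hj
  · rw [← Nat.cast_sub hj]
    exact_mod_cast congrArg (Nat.cast : ℕ → R) (Nat.choose_succ_right_eq N j)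
  · simp [Nat.choose_eq_zero_of_lt hj, Nat.choose_eq_zero_of_lt (hj.trans (Nat.lt_succ_self j))]

theorem sum_mul_sum_erase_le_card_sub_one_mul {ι R : Type*} [DecidableEq ι] [CommRing R]
    [LinearOrder R] [IsStrictOrderedRing R] (D : Finset ι) (x : ι → R) :
    ∑ i ∈ D, x i * ∑ j ∈ D.erase i, x j ≤ ((#D : R) - 1) * ∑ i ∈ D, x i * x i := by
  have hexpand : ∑ i ∈ D, x i * ∑ j ∈ D.erase i, x j
      = (∑ i ∈ D, x i) ^ 2 - ∑ i ∈ D, x i * x i := by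
    rw [sq, sum_mul, ← sum_sub_distrib]
    refine sum_congr rfl fun i hi => ?_
    rw [← add_sum_erase D x hi]
    ring
  rw [hexpand]
  have hCS := sq_sum_le_card_mul_sum_sq (s := D) (f := x)
  simp only [sq] at hCS
  linarith

section ElementarySymmetric

variable {ι R : Type*} [CommRing R] [LinearOrder R] [IsStrictOrderedRing R]
  (s : Finset ι) (x : ι → R)

theorem sum_powersetCard_prod_nonneg (hx : ∀ i, 0 ≤ x i) (j : ℕ) :
    0 ≤ ∑ A ∈ s.powersetCard j, ∏ i ∈ A, x i :=
  sum_nonneg fun _ _ => prod_nonneg fun i _ => hx i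

variable [DecidableEq ι]

theorem mul_sum_powersetCard_sum_sdiff_mul_prod_le (hx : ∀ i, 0 ≤ x i) (j : ℕ) :
    (j : R) * ∑ A ∈ s.powersetCard j, (∑ i ∈ s \ A, x i) * ∏ i ∈ A, x i
      ≤ ((#s : R) - j) * ∑ A ∈ s.powersetCard j, (∑ i ∈ A, x i) * ∏ i ∈ A, x i := by
  rcases j with _ | j
  · simp
  have hcross :
      ((j + 1 : ℕ) : R) * ∑ A ∈ s.powersetCard (j + 1), (∑ i ∈ s \ A, x i) * ∏ i ∈ A, x i
        = ∑ C ∈ s.powersetCard j,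
            (∑ i ∈ s \ C, x i * ∑ i' ∈ (s \ C).erase i, x i') * ∏ i ∈ C, x i := by
    calc _ = ∑ A ∈ s.powersetCard (j + 1),
            (∑ i ∈ A, ∑ i' ∈ s \ insert i (A.erase i), x i') * ∏ i ∈ A, x i := by
          rw [mul_sum]
          refine sum_congr rfl fun A hA => ?_
          have hconst : ∑ i ∈ A, ∑ i' ∈ s \ insert i (A.erase i), x i'
              = #A • ∑ i' ∈ s \ A, x i' := by
            rw [← sum_const]
            exact sum_congr rfl fun i hi => by rw [insert_erase hi]
          rw [hconst, (mem_powersetCard.1 hA).2, nsmul_eq_mul, mul_assoc]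
      _ = _ := sum_powersetCard_succ_sum_mul_prod s x j fun i C => ∑ i' ∈ s \ insert i C, x i'
      _ = _ := by simp only [sdiff_insert, mul_comm]
  have hdiag : ∑ A ∈ s.powersetCard (j + 1), (∑ i ∈ A, x i) * ∏ i ∈ A, x i
      = ∑ C ∈ s.powersetCard j, (∑ i ∈ s \ C, x i * x i) * ∏ i ∈ C, x i :=
    sum_powersetCard_succ_sum_mul_prod s x j fun i _ => x i
  rw [hcross, hdiag, mul_sum]
  refine sum_le_sum fun C hC => ?_
  obtain ⟨hCs, hCcard⟩ := mem_powersetCard.1 hC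
  have hDcard : ((#(s \ C) : ℕ) : R) - 1 = (#s : R) - ((j + 1 : ℕ) : R) := by
    rw [card_sdiff_of_subset hCs, hCcard, Nat.cast_sub (card_le_card hCs |>.trans' hCcard.ge)]
    push_cast
    ring
  rw [← mul_assoc, ← hDcard]
  exact mul_le_mul_of_nonneg_right (sum_mul_sum_erase_le_card_sub_one_mul _ x)
    (prod_nonneg fun i _ => hx i)

theorem card_mul_succ_mul_sum_powersetCard_succ_prod_le (hx : ∀ i, 0 ≤ x i) (j : ℕ) :
    (#s : R) * (j + 1) * ∑ B ∈ s.powersetCard (j + 1), ∏ i ∈ B, x i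
      ≤ ((#s : R) - j) * (∑ A ∈ s.powersetCard j, ∏ i ∈ A, x i) * ∑ i ∈ s, x i := by
  set L := ∑ A ∈ s.powersetCard j, (∑ i ∈ s \ A, x i) * ∏ i ∈ A, x i
  set M := ∑ A ∈ s.powersetCard j, (∑ i ∈ A, x i) * ∏ i ∈ A, x i
  have hsplit : (∑ A ∈ s.powersetCard j, ∏ i ∈ A, x i) * ∑ i ∈ s, x i = L + M := by
    rw [← sum_add_distrib, sum_mul]
    refine sum_congr rfl fun A hA => ?_
    rw [← sum_sdiff (mem_powersetCard.1 hA).1 (f := x)]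
    ring
  have hnewton : (j : R) * L ≤ ((#s : R) - j) * M :=
    mul_sum_powersetCard_sum_sdiff_mul_prod_le s x hx j
  calc (#s : R) * (j + 1) * ∑ B ∈ s.powersetCard (j + 1), ∏ i ∈ B, x i
      = ((#s : R) - j) * L + j * L := by
        rw [mul_assoc, succ_mul_sum_powersetCard_succ_prod]
        ring
    _ ≤ ((#s : R) - j) * (L + M) := by linarith
    _ = _ := by rw [mul_assoc, hsplit]

theorem card_mul_choose_mul_sum_powersetCard_succ_prod_le (hx : ∀ i, 0 ≤ x i) (j : ℕ) :
    (#s : R) * (#s).choose j * ∑ B ∈ s.powersetCard (j + 1), ∏ i ∈ B, x i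
      ≤ (#s).choose (j + 1) * (∑ A ∈ s.powersetCard j, ∏ i ∈ A, x i) * ∑ i ∈ s, x i := by
  set e := ∑ A ∈ s.powersetCard j, ∏ i ∈ A, x i
  set e' := ∑ B ∈ s.powersetCard (j + 1), ∏ i ∈ B, x i
  set p := ∑ i ∈ s, x i
  refine le_of_mul_le_mul_left ?_ (show (0 : R) < j + 1 by positivity)
  calc ((j : R) + 1) * ((#s : R) * (#s).choose j * e')
      = (#s).choose j * ((#s : R) * (j + 1) * e') := by ring
    _ ≤ (#s).choose j * (((#s : R) - j) * e * p) :=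
        mul_le_mul_of_nonneg_left (card_mul_succ_mul_sum_powersetCard_succ_prod_le s x hx j)
          (by positivity)
    _ = ((#s).choose (j + 1) * (j + 1)) * e * p := by rw [Nat.cast_choose_succ_mul]; ring
    _ = ((j : R) + 1) * ((#s).choose (j + 1) * e * p) := by ring

theorem card_pow_mul_choose_mul_sum_powersetCard_add_prod_le (hx : ∀ i, 0 ≤ x i) (a d : ℕ) :
    (#s : R) ^ d * (#s).choose a * ∑ B ∈ s.powersetCard (a + d), ∏ i ∈ B, x i
      ≤ (#s).choose (a + d) * (∑ A ∈ s.powersetCard a, ∏ i ∈ A, x i) * (∑ i ∈ s, x i) ^ d := by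
  have hp : 0 ≤ ∑ i ∈ s, x i := sum_nonneg fun i _ => hx i
  induction d with
  | zero => simp
  | succ d ih =>
    rw [← add_assoc]
    rcases lt_or_ge #s (a + d + 1) with hgt | hle
    · rw [powersetCard_eq_empty.2 hgt, sum_empty, mul_zero]
      have := sum_powersetCard_prod_nonneg s x hx a
      positivity
    have hchoose : (0 : R) < (#s).choose (a + d) := mod_cast Nat.choose_pos (by omega)
    refine le_of_mul_le_mul_left ?_ hchoose
    set e₀ := ∑ A ∈ s.powersetCard a, ∏ i ∈ A, x i
    set e := ∑ B ∈ s.powersetCard (a + d), ∏ i ∈ B, x i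
    set e' := ∑ B ∈ s.powersetCard (a + d + 1), ∏ i ∈ B, x i
    set p := ∑ i ∈ s, x i
    calc ((#s).choose (a + d) : R) * ((#s : R) ^ (d + 1) * (#s).choose a * e')
        = (#s : R) ^ d * (#s).choose a * ((#s : R) * (#s).choose (a + d) * e') := by ring
      _ ≤ (#s : R) ^ d * (#s).choose a * ((#s).choose (a + d + 1) * e * p) :=
          mul_le_mul_of_nonneg_left
            (card_mul_choose_mul_sum_powersetCard_succ_prod_le s x hx (a + d)) (by positivity)
      _ = (#s).choose (a + d + 1) * p * ((#s : R) ^ d * (#s).choose a * e) := by ring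
      _ ≤ (#s).choose (a + d + 1) * p * ((#s).choose (a + d) * e₀ * p ^ d) :=
          mul_le_mul_of_nonneg_left ih (by positivity)
      _ = (#s).choose (a + d) * ((#s).choose (a + d + 1) * e₀ * p ^ (d + 1)) := by ring

end ElementarySymmetric

theorem stmt17_general (m k n τ : ℕ) (hτ : τ ≤ m) (hmk : m ≤ k)
    (T : Finset (Fin n)) (hT : T.card = m) (x : Fin n → ℝ) (hx : ∀ i, 0 ≤ x i) :
    ((n - m : ℕ) : ℝ) ^ (m - τ) * ((n - m).choose (k - m) : ℝ) *
        ∑ Q ∈ (Finset.univ \ T).powersetCard (k - τ), ∏ i ∈ Q, x i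
      ≤ ((n - m).choose (k - τ) : ℝ) *
          (∑ R ∈ (Finset.univ \ T).powersetCard (k - m), ∏ j ∈ R, x j) *
          (∑ i ∈ Finset.univ \ T, x i) ^ (m - τ) := by
  have hcard : #(univ \ T) = n - m := by
    rw [card_sdiff_of_subset (subset_univ T), card_univ, Fintype.card_fin, hT]
  rw [← hcard, show k - τ = (k - m) + (m - τ) by omega]
  exact card_pow_mul_choose_mul_sum_powersetCard_add_prod_le _ x hx (k - m) (m - τ)

/-- Elementary symmetric polynomial inequality (from Maclaurin's and the generalized
Newton inequalities) bounding `e_{k-τ}` on `[n]∖T` by `e_{k-m}` times a power sum. -/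
theorem stmt17 (m k n τ : ℕ) (hτ : τ ≤ m) (hmk : m ≤ k) (hkn : k ≤ n) (hmn : m < n)
    (T : Finset (Fin n)) (hT : T.card = m) (x : Fin n → ℝ) (hx : ∀ i, 0 ≤ x i) :
    ((n - m : ℕ) : ℝ) ^ (m - τ) * ((n - m).choose (k - m) : ℝ) *
        ∑ Q ∈ (Finset.univ \ T).powersetCard (k - τ), ∏ i ∈ Q, x i
      ≤ ((n - m).choose (k - τ) : ℝ) *
          (∑ R ∈ (Finset.univ \ T).powersetCard (k - m), ∏ j ∈ R, x j) *
          (∑ i ∈ Finset.univ \ T, x i) ^ (m - τ) :=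
  stmt17_general m k n τ hτ hmk T hT x hx
end

section
/- Let m ≤ k be positive integers and let y be a real number with 0 ≤ y ≤ m. Then Σ_{τ=0}^{m} ((k−m)!/(k−τ)!) · (C(m,τ)/m^τ) · (k−y)^{m−τ} · y^τ ≤ (1 + k/(k−m+1))^m. -/
open Finset

/-! Compare the sum term by term with the binomial expansion of `(1 + k/(k-m+1))^m`:
`y ≤ m` bounds `y^τ/m^τ` by `1`, `0 ≤ y` bounds `(k-y)^(m-τ)` by `k^(m-τ)`, and the ratio
`(k-m)!/(k-τ)!` is a product of `m-τ` reciprocals of integers at least `k-m+1`. -/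

theorem factorial_div_factorial_add_le (a n : ℕ) :
    (a.factorial : ℝ) / ((a + n).factorial : ℝ) ≤ 1 / ((a : ℝ) + 1) ^ n := by
  rw [div_le_div_iff₀ (by positivity) (by positivity), one_mul]
  exact_mod_cast Nat.factorial_mul_pow_le_factorial

theorem factorial_div_factorial_mul_pow_le {m k τ : ℕ} (hτm : τ ≤ m) (hmk : m ≤ k)
    {x : ℝ} (hx0 : 0 ≤ x) (hxk : x ≤ k) :
    ((k - m).factorial : ℝ) / ((k - τ).factorial : ℝ) * x ^ (m - τ)
      ≤ ((k : ℝ) / ((k : ℝ) - (m : ℝ) + 1)) ^ (m - τ) := by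
  have hkτ : k - τ = (k - m) + (m - τ) := by omega
  have hd : ((k - m : ℕ) : ℝ) + 1 = (k : ℝ) - (m : ℝ) + 1 := by rw [Nat.cast_sub hmk]
  calc ((k - m).factorial : ℝ) / ((k - τ).factorial : ℝ) * x ^ (m - τ)
      ≤ 1 / ((k : ℝ) - (m : ℝ) + 1) ^ (m - τ) * (k : ℝ) ^ (m - τ) := by
        rw [hkτ, ← hd]
        gcongr ?_ * ?_
        · exact factorial_div_factorial_add_le _ _
        · exact pow_le_pow_left₀ hx0 hxk _
    _ = ((k : ℝ) / ((k : ℝ) - (m : ℝ) + 1)) ^ (m - τ) := by rw [div_pow, one_div_mul_eq_div]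

theorem stmt19_general (m k : ℕ) (hmk : m ≤ k)
    (y : ℝ) (hy0 : 0 ≤ y) (hym : y ≤ (m : ℝ)) :
    ∑ τ ∈ Finset.range (m + 1),
        (((k - m).factorial : ℝ) / ((k - τ).factorial : ℝ))
          * ((m.choose τ : ℝ) / (m : ℝ) ^ τ)
          * ((k : ℝ) - y) ^ (m - τ) * y ^ τ
      ≤ (1 + (k : ℝ) / ((k : ℝ) - (m : ℝ) + 1)) ^ m := by
  have hmkR : (m : ℝ) ≤ k := by exact_mod_cast hmk
  rw [add_pow]
  refine sum_le_sum fun τ hτ => ?_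
  have hτm : τ ≤ m := Nat.lt_succ_iff.mp (mem_range.mp hτ)
  have hky : 0 ≤ (k : ℝ) - y := by linarith
  have hyτ : (y / m) ^ τ ≤ 1 := pow_le_one₀ (by positivity) (div_le_one_of_le₀ hym (by positivity))
  have hratio := factorial_div_factorial_mul_pow_le hτm hmk hky (by linarith)
  calc ((k - m).factorial : ℝ) / ((k - τ).factorial : ℝ) * ((m.choose τ : ℝ) / (m : ℝ) ^ τ)
          * ((k : ℝ) - y) ^ (m - τ) * y ^ τ
      = (m.choose τ : ℝ) * (y / m) ^ τ
          * (((k - m).factorial : ℝ) / ((k - τ).factorial : ℝ) * ((k : ℝ) - y) ^ (m - τ)) := by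
        rw [div_pow]; ring
    _ ≤ (m.choose τ : ℝ) * 1 * ((k : ℝ) / ((k : ℝ) - (m : ℝ) + 1)) ^ (m - τ) := by
        gcongr
    _ = 1 ^ τ * ((k : ℝ) / ((k : ℝ) - (m : ℝ) + 1)) ^ (m - τ) * (m.choose τ : ℝ) := by ring

/-- The limiting (as `n → ∞`) bounding function of the proportional sampling analysis
is at most `(1 + k/(k-m+1))^m` for all `y ∈ [0, m]`. -/
theorem stmt19 (m k : ℕ) (hm : 1 ≤ m) (hmk : m ≤ k)
    (y : ℝ) (hy0 : 0 ≤ y) (hym : y ≤ (m : ℝ)) :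
    ∑ τ ∈ Finset.range (m + 1),
        (((k - m).factorial : ℝ) / ((k - τ).factorial : ℝ))
          * ((m.choose τ : ℝ) / (m : ℝ) ^ τ)
          * ((k : ℝ) - y) ^ (m - τ) * y ^ τ
      ≤ (1 + (k : ℝ) / ((k : ℝ) - (m : ℝ) + 1)) ^ m :=
  stmt19_general m k hmk y hy0 hym
end
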